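/- arXiv:2601.21674 — 8 statements merged into one kernel-verified Lean document; each statement's English description precedes it below -/
import Mathlib

section
/- Let ψ : (0,∞) → (0,∞) be continuous and satisfy the weak scaling condition at infinity with constants a̲_ψ, ā_ψ > 0 and exponents 0 < δ̲_ψ ≤ δ̄_ψ < 1, and let V : (0,1] → (0,1) be nondecreasing and satisfy the weak scaling condition at zero with constants ã₁, ã₂ > 0 and exponents 0 < δ̲_V ≤ δ̄_V < 1. Then for every c ≥ 1 there exists C > 1 such that for all s, t ∈ (0, 1/2] with c⁻¹ t ≤ s ≤ c t, one has C⁻¹ ≤ ( V(t) ∫_{V(t)}^1 ψ(h^{-2}) dh ) / ( V(s) ∫_{V(s)}^1 ψ(h^{-2}) dh ) ≤ C. -/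
/-!
Write `I x = ∫_x^1 ψ(h⁻²) dh`. The upper scaling of `ψ` with exponent `δ̄_ψ < 1` makes
`h ↦ h² ψ(h⁻²)` almost increasing on `(0, 1]`, so `ψ(h⁻²)` changes by at most a bounded factor
on an interval `[x, κ x]`. Hence `I x - I y ≲ y ψ(y⁻²) ≲ I y` whenever `x ≤ y ≤ κ x` and
`r y ≤ 1` for a fixed `r > 1` (the second bound integrates over `[y, r y]`), and `x ↦ x I x` is
comparable at comparable arguments. The upper scaling of `V` makes `V s` and `V t` comparable
when `s` and `t` are, and `V ≤ V(1/2) < 1` on `(0, 1/2]` provides `r = V(1/2)⁻¹`.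
-/

open Real MeasureTheory Set

def AlmostMonotoneOn (A : ℝ) (g : ℝ → ℝ) (s : Set ℝ) : Prop :=
  ∀ ⦃x⦄, x ∈ s → ∀ ⦃y⦄, y ∈ s → x ≤ y → g x ≤ A * g y

noncomputable def tailIntegral (f : ℝ → ℝ) (x : ℝ) : ℝ :=
  ∫ h in Ioc x 1, f h

section TailIntegral

variable {f : ℝ → ℝ} {A κ r x y : ℝ} {p : ℕ}

theorem tailIntegral_nonneg (hf : ∀ h ∈ Ioc x 1, 0 ≤ f h) : 0 ≤ tailIntegral f x :=
  setIntegral_nonneg measurableSet_Ioc hf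

theorem tailIntegral_anti (hf_int : IntegrableOn f (Ioc x 1)) (hf : ∀ h ∈ Ioc x 1, 0 ≤ f h)
    (hxy : x ≤ y) : tailIntegral f y ≤ tailIntegral f x :=
  setIntegral_mono_set hf_int ((ae_restrict_iff' measurableSet_Ioc).2 (ae_of_all _ hf))
    (Ioc_subset_Ioc_left hxy).eventuallyLE

theorem setIntegral_Ioc_le_tailIntegral (hf_int : IntegrableOn f (Ioc x 1))
    (hf : ∀ h ∈ Ioc x 1, 0 ≤ f h) (hy : y ≤ 1) :
    ∫ h in Ioc x y, f h ≤ tailIntegral f x :=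
  setIntegral_mono_set hf_int ((ae_restrict_iff' measurableSet_Ioc).2 (ae_of_all _ hf))
    (Ioc_subset_Ioc_right hy).eventuallyLE

theorem tailIntegral_eq_add (hf_int : IntegrableOn f (Ioc x 1)) (hxy : x ≤ y) (hy : y ≤ 1) :
    tailIntegral f x = (∫ h in Ioc x y, f h) + tailIntegral f y := by
  rw [tailIntegral, tailIntegral, ← setIntegral_union (Ioc_disjoint_Ioc_of_le le_rfl)
    measurableSet_Ioc (hf_int.mono_set (Ioc_subset_Ioc_right hy))
    (hf_int.mono_set (Ioc_subset_Ioc_left hxy)), Ioc_union_Ioc_eq_Ioc hxy hy]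

theorem AlmostMonotoneOn.le_mul_pow_of_le_mul {u v : ℝ}
    (hmono : AlmostMonotoneOn A (fun h ↦ h ^ p * f h) (Ioc 0 1)) (hA : 0 ≤ A) (hfv : 0 ≤ f v)
    (hu : 0 < u) (huv : u ≤ v) (hv : v ≤ 1) (hvu : v ≤ κ * u) : f u ≤ A * κ ^ p * f v := by
  have hκ : 0 ≤ κ := nonneg_of_mul_nonneg_left (hu.le.trans (huv.trans hvu)) hu
  have : u ^ p * f u ≤ u ^ p * (A * κ ^ p * f v) :=
    calc u ^ p * f u ≤ A * (v ^ p * f v) := hmono ⟨hu, huv.trans hv⟩ ⟨hu.trans_le huv, hv⟩ huv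
      _ ≤ A * ((κ * u) ^ p * f v) := by gcongr; linarith
      _ = u ^ p * (A * κ ^ p * f v) := by ring
  exact le_of_mul_le_mul_left this (by positivity)

theorem mul_le_tailIntegral (hmono : AlmostMonotoneOn A (fun h ↦ h ^ p * f h) (Ioc 0 1))
    (hA : 0 ≤ A) (hf_int : IntegrableOn f (Ioc y 1)) (hf : ∀ h ∈ Ioc y 1, 0 ≤ f h)
    (hy : 0 < y) (hr : 1 ≤ r) (hry : r * y ≤ 1) :
    (r - 1) * y * f y ≤ A * r ^ p * tailIntegral f y := by
  have hyr : y ≤ r * y := le_mul_of_one_le_left hy.le hr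
  have hf_int' : IntegrableOn f (Ioc y (r * y)) := hf_int.mono_set (Ioc_subset_Ioc_right hry)
  calc (r - 1) * y * f y = ∫ _ in Ioc y (r * y), f y := by
        rw [setIntegral_const, volume_real_Ioc_of_le hyr, smul_eq_mul]; ring
    _ ≤ ∫ h in Ioc y (r * y), A * r ^ p * f h :=
        setIntegral_mono_on (integrableOn_const (by simp)) (hf_int'.const_mul _) measurableSet_Ioc
          fun h hh ↦ hmono.le_mul_pow_of_le_mul hA (hf h ⟨hh.1, hh.2.trans hry⟩) hy hh.1.le
            (hh.2.trans hry) hh.2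
    _ = A * r ^ p * ∫ h in Ioc y (r * y), f h := integral_const_mul _ _
    _ ≤ A * r ^ p * tailIntegral f y := by
        gcongr
        exact setIntegral_Ioc_le_tailIntegral hf_int hf hry

theorem setIntegral_Ioc_le_of_le_mul
    (hmono : AlmostMonotoneOn A (fun h ↦ h ^ p * f h) (Ioc 0 1)) (hA : 0 ≤ A)
    (hf_int : IntegrableOn f (Ioc x y)) (hf : ∀ h ∈ Ioc 0 1, 0 ≤ f h)
    (hx : 0 < x) (hxy : x ≤ y) (hy : y ≤ 1) (hyx : y ≤ κ * x) :
    ∫ h in Ioc x y, f h ≤ (y - x) * (A * κ ^ p * f y) := by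
  have hκ : 0 ≤ κ := nonneg_of_mul_nonneg_left (hx.le.trans (hxy.trans hyx)) hx
  have hfy : 0 ≤ f y := hf y ⟨hx.trans_le hxy, hy⟩
  calc ∫ h in Ioc x y, f h ≤ ∫ _ in Ioc x y, A * κ ^ p * f y :=
        setIntegral_mono_on hf_int (integrableOn_const (by simp)) measurableSet_Ioc
          fun h hh ↦ hmono.le_mul_pow_of_le_mul hA hfy (hx.trans hh.1) hh.2 hy
            (hyx.trans (by gcongr; exact hh.1.le))
    _ = (y - x) * (A * κ ^ p * f y) := by
        rw [setIntegral_const, volume_real_Ioc_of_le hxy, smul_eq_mul]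

theorem tailIntegral_le_mul (hmono : AlmostMonotoneOn A (fun h ↦ h ^ p * f h) (Ioc 0 1))
    (hA : 0 ≤ A) (hf_int : IntegrableOn f (Ioc x 1)) (hf : ∀ h ∈ Ioc 0 1, 0 ≤ f h)
    (hx : 0 < x) (hxy : x ≤ y) (hyx : y ≤ κ * x) (hr : 1 < r) (hry : r * y ≤ 1) :
    tailIntegral f x ≤ (1 + A ^ 2 * κ ^ p * r ^ p / (r - 1)) * tailIntegral f y := by
  have hy : 0 < y := hx.trans_le hxy
  have hy1 : y ≤ 1 := (le_mul_of_one_le_left hy.le hr.le).trans hry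
  have hκ : 0 ≤ κ := nonneg_of_mul_nonneg_left (hy.le.trans hyx) hx
  have hr1 : 0 < r - 1 := sub_pos.2 hr
  have hfy : 0 ≤ f y := hf y ⟨hy, hy1⟩
  have hf_tail : ∀ h ∈ Ioc y 1, 0 ≤ f h := fun h hh ↦ hf h ⟨hy.trans hh.1, hh.2⟩
  have hlow := mul_le_tailIntegral hmono hA (hf_int.mono_set (Ioc_subset_Ioc_left hxy)) hf_tail
    hy hr.le hry
  calc tailIntegral f x = (∫ h in Ioc x y, f h) + tailIntegral f y :=
        tailIntegral_eq_add hf_int hxy hy1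
    _ ≤ y * (A * κ ^ p * f y) + tailIntegral f y := by
        gcongr
        refine (setIntegral_Ioc_le_of_le_mul hmono hA
          (hf_int.mono_set (Ioc_subset_Ioc_right hy1)) hf hx hxy hy1 hyx).trans ?_
        gcongr
        linarith
    _ = A * κ ^ p / (r - 1) * ((r - 1) * y * f y) + tailIntegral f y := by
        field_simp
    _ ≤ A * κ ^ p / (r - 1) * (A * r ^ p * tailIntegral f y) + tailIntegral f y := by
        gcongr
    _ = (1 + A ^ 2 * κ ^ p * r ^ p / (r - 1)) * tailIntegral f y := by
        field_simp
        ring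

theorem tailIntegral_pos (hmono : AlmostMonotoneOn A (fun h ↦ h ^ p * f h) (Ioc 0 1))
    (hA : 0 ≤ A) (hf_int : IntegrableOn f (Ioc y 1)) (hf : ∀ h ∈ Ioc y 1, 0 ≤ f h)
    (hfy : 0 < f y) (hy : 0 < y) (hy1 : y < 1) : 0 < tailIntegral f y := by
  have hlow := mul_le_tailIntegral hmono hA hf_int hf hy (one_le_inv₀ hy |>.2 hy1.le)
    (inv_mul_cancel₀ hy.ne').le
  have : 0 < (y⁻¹ - 1) * y * f y := by
    have : 0 < y⁻¹ - 1 := sub_pos.2 ((one_lt_inv₀ hy).2 hy1)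
    positivity
  exact pos_of_mul_pos_right (this.trans_le hlow) (by positivity)

theorem mul_tailIntegral_le (hmono : AlmostMonotoneOn A (fun h ↦ h ^ p * f h) (Ioc 0 1))
    (hA : 0 ≤ A) (hf_int : ∀ a, 0 < a → IntegrableOn f (Ioc a 1))
    (hf : ∀ h ∈ Ioc 0 1, 0 ≤ f h) (hx : 0 < x) (hy : 0 < y) (hxy : x ≤ κ * y) (hyx : y ≤ κ * x)
    (hr : 1 < r) (hrx : r * x ≤ 1) :
    y * tailIntegral f y ≤
      max κ (1 + A ^ 2 * κ ^ p * r ^ p / (r - 1)) * (x * tailIntegral f x) := by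
  have hT : ∀ z, 0 < z → 0 ≤ tailIntegral f z := fun z hz ↦
    tailIntegral_nonneg fun h hh ↦ hf h ⟨hz.trans hh.1, hh.2⟩
  have hTx := hT x hx
  rcases le_total x y with hle | hle
  · calc y * tailIntegral f y ≤ κ * x * tailIntegral f y := by gcongr; exact hT y hy
      _ ≤ κ * x * tailIntegral f x := by
          have hκ : 0 ≤ κ := nonneg_of_mul_nonneg_left (hy.le.trans hyx) hx
          gcongr
          exact tailIntegral_anti (hf_int x hx) (fun h hh ↦ hf h ⟨hx.trans hh.1, hh.2⟩) hle
      _ ≤ _ := by rw [mul_assoc]; gcongr; exact le_max_left _ _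
  · have hK := tailIntegral_le_mul hmono hA (hf_int y hy) hf hy hle hxy hr hrx
    calc y * tailIntegral f y
        ≤ y * ((1 + A ^ 2 * κ ^ p * r ^ p / (r - 1)) * tailIntegral f x) := by gcongr
      _ ≤ x * ((1 + A ^ 2 * κ ^ p * r ^ p / (r - 1)) * tailIntegral f x) := by
          gcongr
          exact (hT y hy).trans hK
      _ ≤ _ := by rw [mul_left_comm]; gcongr; exact le_max_right _ _

end TailIntegral

theorem almostMonotoneOn_sq_mul_comp_one_div_sq {ψ : ℝ → ℝ} {a δ : ℝ} (ha : 0 ≤ a)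
    (hδ : δ ≤ 1) (hψ : ∀ t, 1 ≤ t → 0 ≤ ψ t)
    (hscale : ∀ lam t, 1 ≤ lam → 1 ≤ t → ψ (lam * t) ≤ a * lam ^ δ * ψ t) :
    AlmostMonotoneOn a (fun h ↦ h ^ 2 * ψ (1 / h ^ 2)) (Ioc 0 1) := by
  intro x hx y hy hxy
  have hx0 := hx.1
  have hy0 : 0 < y := hy.1
  have hlam : 1 ≤ (y / x) ^ 2 := one_le_pow₀ ((one_le_div hx0).2 hxy)
  have ht : 1 ≤ 1 / y ^ 2 := one_le_one_div (by positivity) (pow_le_one₀ hy0.le hy.2)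
  have hψx : ψ (1 / x ^ 2) ≤ a * (y / x) ^ 2 * ψ (1 / y ^ 2) :=
    calc ψ (1 / x ^ 2) = ψ ((y / x) ^ 2 * (1 / y ^ 2)) := by congr 1; field_simp
      _ ≤ a * ((y / x) ^ 2) ^ δ * ψ (1 / y ^ 2) := hscale _ _ hlam ht
      _ ≤ a * (y / x) ^ 2 * ψ (1 / y ^ 2) := by
          gcongr
          · exact hψ _ ht
          · simpa using Real.rpow_le_rpow_of_exponent_le hlam hδ
  calc x ^ 2 * ψ (1 / x ^ 2) ≤ x ^ 2 * (a * (y / x) ^ 2 * ψ (1 / y ^ 2)) := by gcongr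
    _ = a * (y ^ 2 * ψ (1 / y ^ 2)) := by field_simp

theorem le_max_mul_of_upper_scaling {V : ℝ → ℝ} {a δ c s t : ℝ} (ha : 0 ≤ a) (hδ : δ ≤ 1)
    (hmono : ∀ s t, 0 < s → s ≤ t → t ≤ 1 → V s ≤ V t)
    (hscale : ∀ s t, 0 < s → s ≤ t → t ≤ 1 → V t / V s ≤ a * (t / s) ^ δ)
    (hVs : 0 < V s) (hs : 0 < s) (ht : 0 < t) (hs1 : s ≤ 1) (ht1 : t ≤ 1) (htc : t ≤ c * s) :
    V t ≤ max (a * c) 1 * V s := by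
  rcases le_total s t with hst | hts
  · have hratio : (t / s) ^ δ ≤ c :=
      calc (t / s) ^ δ ≤ (t / s) ^ (1 : ℝ) :=
            Real.rpow_le_rpow_of_exponent_le ((one_le_div hs).2 hst) hδ
        _ ≤ c := by rw [Real.rpow_one, div_le_iff₀ hs]; exact htc
    calc V t ≤ a * c * V s := by
          rw [← div_le_iff₀ hVs]
          exact (hscale s t hs hst ht1).trans (by gcongr)
      _ ≤ max (a * c) 1 * V s := by gcongr; exact le_max_left _ _
  · calc V t ≤ V s := hmono t s ht hts hs1
      _ ≤ max (a * c) 1 * V s := le_mul_of_one_le_left hVs.le (le_max_right _ _)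

theorem inv_le_div_and_div_le_of_le_mul {a b M C : ℝ} (ha : 0 < a) (hb : 0 < b)
    (hab : a ≤ M * b) (hba : b ≤ M * a) (hMC : M ≤ C) : C⁻¹ ≤ a / b ∧ a / b ≤ C := by
  have hM : 0 < M := pos_of_mul_pos_left (hb.trans_le hba) ha.le
  have hC : 0 < C := hM.trans_le hMC
  constructor
  · rw [le_div_iff₀ hb, inv_mul_le_iff₀ hC]
    exact hba.trans (mul_le_mul_of_nonneg_right hMC ha.le)
  · rw [div_le_iff₀ hb]
    exact hab.trans (mul_le_mul_of_nonneg_right hMC hb.le)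

theorem ContinuousOn.integrableOn_Ioc_comp_one_div_sq {ψ : ℝ → ℝ} {a : ℝ}
    (hψ : ContinuousOn ψ (Ioi 0)) (ha : 0 < a) :
    IntegrableOn (fun h ↦ ψ (1 / h ^ 2)) (Ioc a 1) := by
  have hpos : ∀ h ∈ Icc a 1, 0 < h := fun h hh ↦ ha.trans_le hh.1
  have hcont : ContinuousOn (fun h : ℝ ↦ ψ (1 / h ^ 2)) (Icc a 1) :=
    hψ.comp (continuousOn_const.div (continuousOn_pow 2) fun h hh ↦ (pow_pos (hpos h hh) 2).ne')
      fun h hh ↦ show 0 < 1 / h ^ 2 by have := hpos h hh; positivity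
  exact hcont.integrableOn_Icc.mono_set Ioc_subset_Icc_self

theorem stmt_2_general (ψ V : ℝ → ℝ) (aψ₁ aψ₂ δψ₁ δψ₂ aV₁ aV₂ δV₁ δV₂ : ℝ)
    (haψ₂ : 0 < aψ₂) (hδψ₂ : δψ₂ < 1)
    (haV₂ : 0 < aV₂) (hδV₂ : δV₂ < 1)
    (hψcont : ContinuousOn ψ (Set.Ioi 0))
    (hψpos : ∀ t : ℝ, 0 < t → 0 < ψ t)
    (hVrange : ∀ t : ℝ, 0 < t → t ≤ 1 → 0 < V t ∧ V t < 1)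
    (hVmono : ∀ s t : ℝ, 0 < s → s ≤ t → t ≤ 1 → V s ≤ V t)
    (hψscale : ∀ lam t : ℝ, 1 ≤ lam → 1 ≤ t →
      aψ₁ * lam ^ δψ₁ * ψ t ≤ ψ (lam * t) ∧ ψ (lam * t) ≤ aψ₂ * lam ^ δψ₂ * ψ t)
    (hVscale : ∀ s t : ℝ, 0 < s → s ≤ t → t ≤ 1 →
      aV₁ * (t / s) ^ δV₁ ≤ V t / V s ∧ V t / V s ≤ aV₂ * (t / s) ^ δV₂) :
    ∀ c : ℝ, 1 ≤ c → ∃ C : ℝ, 1 < C ∧ ∀ s t : ℝ,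
      0 < s → s ≤ 1 / 2 → 0 < t → t ≤ 1 / 2 → c⁻¹ * t ≤ s → s ≤ c * t →
      C⁻¹ ≤ (V t * ∫ h in Set.Ioc (V t) 1, ψ (1 / h ^ 2)) /
              (V s * ∫ h in Set.Ioc (V s) 1, ψ (1 / h ^ 2)) ∧
      (V t * ∫ h in Set.Ioc (V t) 1, ψ (1 / h ^ 2)) /
          (V s * ∫ h in Set.Ioc (V s) 1, ψ (1 / h ^ 2)) ≤ C := by
  intro c hc
  set f : ℝ → ℝ := fun h ↦ ψ (1 / h ^ 2)
  have hf_pos : ∀ h, 0 < h → 0 < f h := fun h hh ↦ hψpos _ (by positivity)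
  have hf_int : ∀ a, 0 < a → IntegrableOn f (Ioc a 1) := fun _ ↦
    hψcont.integrableOn_Ioc_comp_one_div_sq
  have hmono : AlmostMonotoneOn aψ₂ (fun h ↦ h ^ 2 * f h) (Ioc 0 1) :=
    almostMonotoneOn_sq_mul_comp_one_div_sq haψ₂.le hδψ₂.le
      (fun t ht ↦ (hψpos t (one_pos.trans_le ht)).le)
      fun lam t hlam ht ↦ (hψscale lam t hlam ht).2
  have hVcomp : ∀ s t, 0 < s → s ≤ 1 / 2 → 0 < t → t ≤ 1 / 2 → t ≤ c * s →
      V t ≤ max (aV₂ * c) 1 * V s := fun s t hs hs2 ht ht2 htc ↦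
    le_max_mul_of_upper_scaling haV₂.le hδV₂.le hVmono
      (fun s t hs hst ht ↦ (hVscale s t hs hst ht).2) (hVrange s hs (by linarith)).1 hs ht
      (by linarith) (by linarith) htc
  obtain ⟨hV₀, hV₀1⟩ := hVrange (1 / 2) (by norm_num) (by norm_num)
  set r := (V (1 / 2))⁻¹
  set κ := max (aV₂ * c) 1
  set M := max κ (1 + aψ₂ ^ 2 * κ ^ 2 * r ^ 2 / (r - 1))
  have hg : ∀ s t, 0 < s → s ≤ 1 / 2 → 0 < t → t ≤ 1 / 2 → t ≤ c * s → s ≤ c * t →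
      V t * tailIntegral f (V t) ≤ M * (V s * tailIntegral f (V s)) :=
    fun s t hs hs2 ht ht2 htc hsc ↦
      mul_tailIntegral_le hmono haψ₂.le hf_int (fun h hh ↦ (hf_pos h hh.1).le)
        (hVrange s hs (by linarith)).1 (hVrange t ht (by linarith)).1
        (hVcomp t s ht ht2 hs hs2 hsc) (hVcomp s t hs hs2 ht ht2 htc) ((one_lt_inv₀ hV₀).2 hV₀1)
        ((inv_mul_le_iff₀ hV₀).2 (by simpa using hVmono s (1 / 2) hs hs2 (by norm_num)))
  have hg_pos : ∀ s, 0 < s → s ≤ 1 / 2 → 0 < V s * tailIntegral f (V s) := fun s hs hs2 ↦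
    have ⟨hVs, hVs1⟩ := hVrange s hs (by linarith)
    mul_pos hVs (tailIntegral_pos hmono haψ₂.le (hf_int _ hVs)
      (fun h hh ↦ (hf_pos h (hVs.trans hh.1)).le) (hf_pos _ hVs) hVs hVs1)
  refine ⟨max M 2, lt_max_of_lt_right one_lt_two, fun s t hs hs2 ht ht2 hcs hsc ↦ ?_⟩
  have htc : t ≤ c * s := (inv_mul_le_iff₀ (one_pos.trans_le hc)).1 hcs
  exact inv_le_div_and_div_le_of_le_mul (hg_pos t ht ht2) (hg_pos s hs hs2)
    (hg s t hs hs2 ht ht2 htc hsc) (hg t s ht ht2 hs hs2 hsc htc) (le_max_left M 2)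

/-- If `ψ` is continuous and satisfies the weak scaling condition at infinity, and `V` is
nondecreasing with values in `(0,1)` and satisfies the weak scaling condition at zero, then
`t ↦ V(t) ∫_{V(t)}^1 ψ(h⁻²) dh` is comparable at comparable scales `s ≍ t` in `(0, 1/2]`. -/
theorem stmt_2 (ψ V : ℝ → ℝ) (aψ₁ aψ₂ δψ₁ δψ₂ aV₁ aV₂ δV₁ δV₂ : ℝ)
    (haψ₁ : 0 < aψ₁) (haψ₂ : 0 < aψ₂) (hδψ₁ : 0 < δψ₁) (hδψ : δψ₁ ≤ δψ₂) (hδψ₂ : δψ₂ < 1)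
    (haV₁ : 0 < aV₁) (haV₂ : 0 < aV₂) (hδV₁ : 0 < δV₁) (hδV : δV₁ ≤ δV₂) (hδV₂ : δV₂ < 1)
    (hψcont : ContinuousOn ψ (Set.Ioi 0))
    (hψpos : ∀ t : ℝ, 0 < t → 0 < ψ t)
    (hVrange : ∀ t : ℝ, 0 < t → t ≤ 1 → 0 < V t ∧ V t < 1)
    (hVmono : ∀ s t : ℝ, 0 < s → s ≤ t → t ≤ 1 → V s ≤ V t)
    (hψscale : ∀ lam t : ℝ, 1 ≤ lam → 1 ≤ t →
      aψ₁ * lam ^ δψ₁ * ψ t ≤ ψ (lam * t) ∧ ψ (lam * t) ≤ aψ₂ * lam ^ δψ₂ * ψ t)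
    (hVscale : ∀ s t : ℝ, 0 < s → s ≤ t → t ≤ 1 →
      aV₁ * (t / s) ^ δV₁ ≤ V t / V s ∧ V t / V s ≤ aV₂ * (t / s) ^ δV₂) :
    ∀ c : ℝ, 1 ≤ c → ∃ C : ℝ, 1 < C ∧ ∀ s t : ℝ,
      0 < s → s ≤ 1 / 2 → 0 < t → t ≤ 1 / 2 → c⁻¹ * t ≤ s → s ≤ c * t →
      C⁻¹ ≤ (V t * ∫ h in Set.Ioc (V t) 1, ψ (1 / h ^ 2)) /
              (V s * ∫ h in Set.Ioc (V s) 1, ψ (1 / h ^ 2)) ∧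
      (V t * ∫ h in Set.Ioc (V t) 1, ψ (1 / h ^ 2)) /
          (V s * ∫ h in Set.Ioc (V s) 1, ψ (1 / h ^ 2)) ≤ C :=
  stmt_2_general ψ V aψ₁ aψ₂ δψ₁ δψ₂ aV₁ aV₂ δV₁ δV₂ haψ₂ hδψ₂ haV₂ hδV₂ hψcont hψpos hVrange hVmono
    hψscale hVscale
end

section
/- Let ψ : [1,∞) → (0,∞) be measurable and satisfy the lower weak scaling condition at infinity with constant a̲ > 0 and exponent δ̲ ∈ (0,1). Then there exist η ∈ (0,1) and C > 0, depending only on a̲ and δ̲, such that for every a ∈ (0,1]: ∫_a^1 ψ(s^{-2}) ds ≤ C a^η ψ(a^{-2}). -/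
open Real MeasureTheory

/-- If `ψ : [1,∞) → (0,∞)` is measurable and satisfies the lower weak scaling condition at
infinity with constant `a` and exponent `δ ∈ (0,1)`, then there are `η ∈ (0,1)` and `C > 0`
such that `∫_r^1 ψ(s⁻²) ds ≤ C r^η ψ(r⁻²)` for all `r ∈ (0,1]`. -/
theorem stmt_3 (ψ : ℝ → ℝ) (a δ : ℝ) (ha : 0 < a) (hδ : 0 < δ) (hδ1 : δ < 1)
    (hmeas : Measurable ψ) (hψpos : ∀ t : ℝ, 1 ≤ t → 0 < ψ t)
    (hscale : ∀ lam t : ℝ, 1 ≤ lam → 1 ≤ t → a * lam ^ δ * ψ t ≤ ψ (lam * t)) :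
    ∃ η : ℝ, η ∈ Set.Ioo (0 : ℝ) 1 ∧ ∃ C : ℝ, 0 < C ∧
      ∀ r : ℝ, 0 < r → r ≤ 1 →
        (∫ s in Set.Ioc r 1, ψ (1 / s ^ 2)) ≤ C * r ^ η * ψ (1 / r ^ 2) := by
  refine ⟨δ, ⟨hδ, hδ1⟩, (a * (1 - δ))⁻¹, inv_pos.mpr (mul_pos ha (by linarith)), ?_⟩
  intro r hr hr1
  have hr2 : (1 : ℝ) ≤ 1 / r ^ 2 := by
    rw [le_div_iff₀ (by positivity)]; nlinarith
  have hψr : 0 < ψ (1 / r ^ 2) := hψpos _ hr2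
  set K : ℝ := a⁻¹ * ψ (1 / r ^ 2) * r ^ δ with hK
  have hKpos : 0 < K := by
    have : (0:ℝ) < r ^ δ := Real.rpow_pos_of_pos hr δ
    positivity
  have key : ∀ s ∈ Set.Ioc r 1, ψ (1 / s ^ 2) ≤ K * s ^ (-δ) := by
    intro s hs
    obtain ⟨hrs, hs1⟩ := hs
    have hs0 : 0 < s := hr.trans hrs
    have hsr1 : 1 ≤ s / r := (one_le_div hr).mpr hrs.le
    have hlam : 1 ≤ (s / r) ^ 2 := by nlinarith
    have ht : 1 ≤ 1 / s ^ 2 := by rw [le_div_iff₀ (by positivity)]; nlinarith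
    have hψs : 0 < ψ (1 / s ^ 2) := hψpos _ ht
    have h1 := hscale ((s / r) ^ 2) (1 / s ^ 2) hlam ht
    have heq : (s / r) ^ 2 * (1 / s ^ 2) = 1 / r ^ 2 := by
      field_simp
    rw [heq] at h1
    have h2 : (s / r) ^ δ ≤ ((s / r) ^ 2 : ℝ) ^ δ := by
      apply Real.rpow_le_rpow (by positivity) _ hδ.le
      nlinarith
    have hpow : (0:ℝ) < (s / r) ^ δ := Real.rpow_pos_of_pos (by positivity) δ
    have h3 : a * (s / r) ^ δ * ψ (1 / s ^ 2) ≤ ψ (1 / r ^ 2) := by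
      nlinarith
    have hrw : K * s ^ (-δ) = ψ (1 / r ^ 2) / (a * (s / r) ^ δ) := by
      rw [hK, Real.div_rpow hs0.le hr.le, Real.rpow_neg hs0.le]
      have h4 : (0:ℝ) < s ^ δ := Real.rpow_pos_of_pos hs0 δ
      have h5 : (0:ℝ) < r ^ δ := Real.rpow_pos_of_pos hr δ
      field_simp
    rw [hrw, le_div_iff₀ (by positivity)]
    nlinarith
  have hg_int : IntegrableOn (fun s : ℝ => K * s ^ (-δ)) (Set.Ioc r 1) := by
    have h : IntervalIntegrable (fun s : ℝ => s ^ (-δ)) volume r 1 :=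
      intervalIntegral.intervalIntegrable_rpow' (by linarith : (-1:ℝ) < -δ)
    exact ((h.const_mul K).1)
  have hf_int : IntegrableOn (fun s : ℝ => ψ (1 / s ^ 2)) (Set.Ioc r 1) := by
    apply hg_int.mono'
    · exact (hmeas.comp (measurable_const.div (measurable_id.pow_const 2))).aestronglyMeasurable
    · rw [MeasureTheory.ae_restrict_iff' measurableSet_Ioc]
      filter_upwards with s hs
      have ht : 1 ≤ 1 / s ^ 2 := by
        have hs0 : 0 < s := hr.trans hs.1
        rw [le_div_iff₀ (by positivity)]; nlinarith [hs.2]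
      rw [Real.norm_eq_abs, abs_of_nonneg (hψpos _ ht).le]
      exact key s hs
  have hint : ∫ s in Set.Ioc r 1, s ^ (-δ) ≤ (1 - δ)⁻¹ := by
    rw [← intervalIntegral.integral_of_le hr1]
    rw [show (∫ x in r..(1:ℝ), x ^ (-δ)) = ((1:ℝ) ^ (-δ + 1) - r ^ (-δ + 1)) / (-δ + 1) from
      integral_rpow (Or.inl (by linarith)), Real.one_rpow]
    have h1 : 0 ≤ r ^ (-δ + 1) := Real.rpow_nonneg hr.le _
    have h2 : (0:ℝ) < -δ + 1 := by linarith
    rw [show ((1:ℝ) - δ)⁻¹ = 1 / (-δ + 1) by rw [one_div]; ring_nf]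
    gcongr
    linarith
  calc (∫ s in Set.Ioc r 1, ψ (1 / s ^ 2))
      ≤ ∫ s in Set.Ioc r 1, K * s ^ (-δ) :=
        setIntegral_mono_on hf_int hg_int measurableSet_Ioc key
    _ = K * ∫ s in Set.Ioc r 1, s ^ (-δ) := by rw [MeasureTheory.integral_const_mul]
    _ ≤ K * (1 - δ)⁻¹ := mul_le_mul_of_nonneg_left hint hKpos.le
    _ = (a * (1 - δ))⁻¹ * r ^ δ * ψ (1 / r ^ 2) := by
        rw [hK, mul_inv]; ring
end

section
/- Let d ≥ 1, let D ⊂ ℝ^d be a nonempty bounded open set, let σ be a finite Borel measure on ∂D, and let P : D × ∂D → (0,∞) be Borel measurable such that Pσ(x) := ∫_{∂D} P(x,z) dσ(z) ∈ (0,∞) for every x ∈ D. Assume there exist C₁, C₂ > 0 such that (i) P(x,z) ≤ C₁ (δ_D(x)/|x−z|^d) Pσ(x) for all x ∈ D and z ∈ ∂D, and (ii) δ_D(x) ∫_{∂D} |x−z|^{-d} dσ(z) ≤ C₂ for all x ∈ D. Let ζ : ∂D → ℝ be σ-integrable, and let z₀ ∈ ∂D be a point at which ζ restricted to ∂D is continuous.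 Then lim_{D ∋ x → z₀} Pζ(x)/Pσ(x) = ζ(z₀), where Pζ(x) := ∫_{∂D} P(x,z) ζ(z) dσ(z). Moreover, if ζ is continuous on ∂D, the convergence is uniform in z₀ ∈ ∂D: for every ε > 0 there exists r > 0 such that |Pζ(x)/Pσ(x) − ζ(z₀)| ≤ ε whenever z₀ ∈ ∂D, x ∈ D and |x − z₀| < r. -/
/-!
`Pζ(x)/Pσ(x) - ζ(w)` is the average of `ζ - ζ(w)` against the probability density
`P(x, ·)/Pσ(x)` on `∂D`. Near `w` the integrand is small by continuity of `ζ`. At boundary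
points `z` with `|z - w| ≥ η`, while `|x - w| < η/2`, the kernel bound gives density at most
`C₁ (2/η)^d δ_D(x) ≤ C₁ (2/η)^d |x - w|`, so this part contributes at most
`C₁ (2/η)^d |x - w| ∫ |ζ - ζ(w)| dσ`, which vanishes as `x → w`. For continuous `ζ` both `η` and
`∫ |ζ - ζ(w)| dσ` can be chosen uniformly in `w`, by compactness of `∂D`.
-/

open Real MeasureTheory Metric Filter

theorem abs_setIntegral_mul_div_sub_le {α : Type*} [MeasurableSpace α] {μ : Measure α}
    [IsFiniteMeasure μ] {A S : Set α} (hA : MeasurableSet A) {k f : α → ℝ} {a ε c : ℝ}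
    (hk0 : ∀ z ∈ A, 0 ≤ k z) (hk : IntegrableOn k A μ) (hkpos : 0 < ∫ z in A, k z ∂μ)
    (hf : IntegrableOn f A μ) (hkf : IntegrableOn (fun z => k z * f z) A μ)
    (hε : 0 ≤ ε) (hc : 0 ≤ c) (hnear : ∀ z ∈ A, z ∈ S → |f z - a| ≤ ε)
    (hfar : ∀ z ∈ A, z ∉ S → k z ≤ c * ∫ z in A, k z ∂μ) :
    |(∫ z in A, k z * f z ∂μ) / (∫ z in A, k z ∂μ) - a| ≤
      ε + c * ∫ z in A, |f z - a| ∂μ := by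
  set I := ∫ z in A, k z ∂μ with hI
  have hfa : IntegrableOn (fun z => |f z - a|) A μ := (hf.sub integrableOn_const).abs
  have hkfa : IntegrableOn (fun z => k z * (f z - a)) A μ := by
    simp only [mul_sub]
    exact hkf.sub (hk.mul_const a)
  have hpointwise : ∀ z ∈ A, |k z * (f z - a)| ≤ ε * k z + c * I * |f z - a| := by
    intro z hz
    rw [abs_mul, abs_of_nonneg (hk0 z hz)]
    by_cases hzS : z ∈ S
    · have := mul_le_mul_of_nonneg_left (hnear z hz hzS) (hk0 z hz)
      nlinarith [abs_nonneg (f z - a), mul_nonneg hc hkpos.le]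
    · have := mul_le_mul_of_nonneg_right (hfar z hz hzS) (abs_nonneg (f z - a))
      nlinarith [hk0 z hz]
  have hbound : |∫ z in A, k z * (f z - a) ∂μ| ≤ ε * I + c * I * ∫ z in A, |f z - a| ∂μ :=
    calc |∫ z in A, k z * (f z - a) ∂μ|
        ≤ ∫ z in A, |k z * (f z - a)| ∂μ := abs_integral_le_integral_abs
      _ ≤ ∫ z in A, (ε * k z + c * I * |f z - a|) ∂μ :=
          setIntegral_mono_on hkfa.abs ((hk.const_mul ε).add (hfa.const_mul _)) hA hpointwise
      _ = ε * I + c * I * ∫ z in A, |f z - a| ∂μ := by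
          rw [integral_add (hk.const_mul ε) (hfa.const_mul _), integral_const_mul,
            integral_const_mul]
  have hdiff : (∫ z in A, k z * f z ∂μ) / I - a = (∫ z in A, k z * (f z - a) ∂μ) / I := by
    simp only [mul_sub]
    rw [integral_sub hkf (hk.mul_const a), integral_mul_const, ← hI]
    field_simp
  rw [hdiff, abs_div, abs_of_pos hkpos, div_le_iff₀ hkpos]
  linarith

variable {X : Type*} [PseudoMetricSpace X] [MeasurableSpace X]

structure BoundaryKernelEstimate (D : Set X) (σ : Measure X) (P : X → X → ℝ) (C : ℝ) (n : ℕ) :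
    Prop where
  nonneg : ∀ x ∈ D, ∀ z ∈ frontier D, 0 ≤ P x z
  integrableOn : ∀ x ∈ D, IntegrableOn (P x) (frontier D) σ
  integral_pos : ∀ x ∈ D, 0 < ∫ z in frontier D, P x z ∂σ
  le : ∀ x ∈ D, ∀ z ∈ frontier D,
    P x z ≤ C * (infDist x Dᶜ / dist x z ^ n) * ∫ w in frontier D, P x w ∂σ

namespace BoundaryKernelEstimate

variable {D : Set X} {σ : Measure X} {P : X → X → ℝ} {C : ℝ} {n : ℕ} {ζ : X → ℝ} {x w : X}

theorem le_of_le_dist (hP : BoundaryKernelEstimate D σ P C n) (hC : 0 ≤ C) (hx : x ∈ D)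
    {z : X} (hz : z ∈ frontier D) {η : ℝ} (hη : 0 < η) (hxw : dist x w < η / 2)
    (hzw : η ≤ dist z w) :
    P x z ≤ C * (2 / η) ^ n * infDist x Dᶜ * ∫ y in frontier D, P x y ∂σ := by
  have hxz : η / 2 ≤ dist x z := by linarith [dist_triangle_left z w x]
  have hdist : infDist x Dᶜ / dist x z ^ n ≤ (2 / η) ^ n * infDist x Dᶜ :=
    calc infDist x Dᶜ / dist x z ^ n ≤ infDist x Dᶜ / (η / 2) ^ n := by
          gcongr
          exact infDist_nonneg
      _ = (2 / η) ^ n * infDist x Dᶜ := by rw [div_eq_inv_mul, ← inv_pow, inv_div]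
  calc P x z ≤ C * (infDist x Dᶜ / dist x z ^ n) * ∫ y in frontier D, P x y ∂σ := hP.le x hx z hz
    _ ≤ C * ((2 / η) ^ n * infDist x Dᶜ) * ∫ y in frontier D, P x y ∂σ := by
        gcongr
        exact (hP.integral_pos x hx).le
    _ = C * (2 / η) ^ n * infDist x Dᶜ * ∫ y in frontier D, P x y ∂σ := by ring

theorem integrableOn_mul [OpensMeasurableSpace X] (hP : BoundaryKernelEstimate D σ P C n)
    (hD : IsOpen D) (hC : 0 ≤ C) (hζ : IntegrableOn ζ (frontier D) σ) (hx : x ∈ D) :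
    IntegrableOn (fun z => P x z * ζ z) (frontier D) σ := by
  have hfr : frontier D ⊆ Dᶜ := (disjoint_frontier_iff_isOpen.2 hD).subset_compl_right
  rcases Dᶜ.eq_empty_or_nonempty with hDc | hDc
  · have hempty : frontier D = ∅ := by simpa [hDc] using hfr
    rw [hempty]
    exact integrableOn_empty
  have hδ : 0 < infDist x Dᶜ :=
    (hD.isClosed_compl.notMem_iff_infDist_pos hDc).1 (not_not.2 hx)
  refine hζ.bdd_mul (hP.integrableOn x hx).aestronglyMeasurable
    (c := C * (infDist x Dᶜ / infDist x Dᶜ ^ n) * ∫ y in frontier D, P x y ∂σ) ?_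
  refine (ae_restrict_iff' isClosed_frontier.measurableSet).2 (ae_of_all _ fun z hz => ?_)
  rw [Real.norm_eq_abs, abs_of_nonneg (hP.nonneg x hx z hz)]
  refine (hP.le x hx z hz).trans ?_
  gcongr
  · exact (hP.integral_pos x hx).le
  · exact infDist_le_dist_of_mem (hfr hz)

theorem abs_integral_mul_div_sub_le [IsFiniteMeasure σ] [OpensMeasurableSpace X]
    (hP : BoundaryKernelEstimate D σ P C n) (hD : IsOpen D) (hC : 0 ≤ C)
    (hζ : IntegrableOn ζ (frontier D) σ) (hw : w ∈ frontier D) {η ε : ℝ} (hη : 0 < η)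
    (hε : 0 ≤ ε) (hmod : ∀ z ∈ frontier D, dist z w < η → |ζ z - ζ w| ≤ ε) (hx : x ∈ D)
    (hxw : dist x w < η / 2) :
    |(∫ z in frontier D, P x z * ζ z ∂σ) / (∫ z in frontier D, P x z ∂σ) - ζ w| ≤
      ε + C * (2 / η) ^ n * dist x w * ∫ z in frontier D, |ζ z - ζ w| ∂σ := by
  have hδ : infDist x Dᶜ ≤ dist x w :=
    infDist_le_dist_of_mem ((disjoint_frontier_iff_isOpen.2 hD).subset_compl_right hw)
  refine (abs_setIntegral_mul_div_sub_le isClosed_frontier.measurableSet (S := ball w η)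
    (hP.nonneg x hx) (hP.integrableOn x hx) (hP.integral_pos x hx) hζ
    (hP.integrableOn_mul hD hC hζ hx) hε (mul_nonneg (by positivity) infDist_nonneg) hmod
    fun z hz hzw => hP.le_of_le_dist hC hx hz hη hxw (not_lt.1 hzw)).trans ?_
  have : 0 ≤ ∫ z in frontier D, |ζ z - ζ w| ∂σ := integral_nonneg fun z => abs_nonneg _
  gcongr

theorem exists_pos_forall_abs_integral_mul_div_sub_le [IsFiniteMeasure σ]
    [OpensMeasurableSpace X] (hP : BoundaryKernelEstimate D σ P C n) (hD : IsOpen D)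
    (hC : 0 ≤ C) (hζ : IntegrableOn ζ (frontier D) σ) {W : Set X} (hW : W ⊆ frontier D) {M : ℝ}
    (hM : ∀ w ∈ W, ∫ z in frontier D, |ζ z - ζ w| ∂σ ≤ M)
    (hmod : ∀ ε > 0, ∃ η > 0, ∀ w ∈ W, ∀ z ∈ frontier D, dist z w < η → |ζ z - ζ w| ≤ ε)
    {ε : ℝ} (hε : 0 < ε) :
    ∃ r > 0, ∀ w ∈ W, ∀ x ∈ D, dist x w < r →
      |(∫ z in frontier D, P x z * ζ z ∂σ) / (∫ z in frontier D, P x z ∂σ) - ζ w| ≤ ε := by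
  obtain ⟨η, hη, hmodη⟩ := hmod (ε / 2) (half_pos hε)
  set K := C * (2 / η) ^ n * |M| with hKdef
  have hK : 0 ≤ K := by positivity
  refine ⟨min (η / 2) (ε / (2 * (K + 1))), by positivity, fun w hw x hx hxw => ?_⟩
  refine (hP.abs_integral_mul_div_sub_le hD hC hζ (hW hw) hη (half_pos hε).le (hmodη w hw) hx
    (hxw.trans_le (min_le_left _ _))).trans ?_
  have hdist : dist x w * (2 * (K + 1)) < ε :=
    (lt_div_iff₀ (by positivity)).1 (hxw.trans_le (min_le_right _ _))
  have hKM : C * (2 / η) ^ n * dist x w * ∫ z in frontier D, |ζ z - ζ w| ∂σ ≤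
      K * dist x w :=
    calc C * (2 / η) ^ n * dist x w * ∫ z in frontier D, |ζ z - ζ w| ∂σ
        = C * (2 / η) ^ n * (∫ z in frontier D, |ζ z - ζ w| ∂σ) * dist x w := by ring
      _ ≤ K * dist x w := by
        rw [hKdef]
        gcongr
        exact (hM w hw).trans (le_abs_self M)
  nlinarith [dist_nonneg (x := x) (y := w)]

end BoundaryKernelEstimate

theorem stmt_6_general (d : ℕ)
    (D : Set (EuclideanSpace ℝ (Fin d))) (hD : IsOpen D)
    (hDb : Bornology.IsBounded D)
    (σ : Measure (EuclideanSpace ℝ (Fin d))) [IsFiniteMeasure σ]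
    (P : EuclideanSpace ℝ (Fin d) → EuclideanSpace ℝ (Fin d) → ℝ)
    (hPpos : ∀ x ∈ D, ∀ z ∈ frontier D, 0 < P x z)
    (hPint : ∀ x ∈ D, IntegrableOn (P x) (frontier D) σ)
    (hPσpos : ∀ x ∈ D, 0 < ∫ z in frontier D, P x z ∂σ)
    (C₁ : ℝ) (hC₁ : 0 < C₁)
    (hker : ∀ x ∈ D, ∀ z ∈ frontier D,
      P x z ≤ C₁ * (infDist x Dᶜ / dist x z ^ d) * ∫ w in frontier D, P x w ∂σ)
    (ζ : EuclideanSpace ℝ (Fin d) → ℝ) (hζint : IntegrableOn ζ (frontier D) σ)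
    (z₀ : EuclideanSpace ℝ (Fin d)) (hz₀ : z₀ ∈ frontier D)
    (hζcont : ContinuousWithinAt ζ (frontier D) z₀) :
    Tendsto (fun x => (∫ z in frontier D, P x z * ζ z ∂σ) / ∫ z in frontier D, P x z ∂σ)
      (nhdsWithin z₀ D) (nhds (ζ z₀)) ∧
    (ContinuousOn ζ (frontier D) → ∀ ε : ℝ, 0 < ε → ∃ r : ℝ, 0 < r ∧
      ∀ w ∈ frontier D, ∀ x ∈ D, dist x w < r →
        |(∫ z in frontier D, P x z * ζ z ∂σ) / (∫ z in frontier D, P x z ∂σ) - ζ w| ≤ ε) := by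
  have hP : BoundaryKernelEstimate D σ P C₁ d :=
    ⟨fun x hx z hz => (hPpos x hx z hz).le, hPint, hPσpos, hker⟩
  constructor
  · refine Metric.tendsto_nhdsWithin_nhds.2 fun ε hε => ?_
    have hmod : ∀ ε > 0, ∃ η > 0, ∀ w ∈ ({z₀} : Set _), ∀ z ∈ frontier D,
        dist z w < η → |ζ z - ζ w| ≤ ε := fun ε hε => by
      obtain ⟨η, hη, h⟩ := Metric.continuousWithinAt_iff.1 hζcont ε hε
      exact ⟨η, hη, by rintro w rfl z hz hzw; exact (h hz hzw).le⟩
    obtain ⟨r, hr, hball⟩ := hP.exists_pos_forall_abs_integral_mul_div_sub_le hD hC₁.le hζint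
      (Set.singleton_subset_iff.2 hz₀) (M := ∫ z in frontier D, |ζ z - ζ z₀| ∂σ) (by simp) hmod
      (half_pos hε)
    exact ⟨r, hr, fun x hx hxz => (hball z₀ rfl x hx hxz).trans_lt (half_lt_self hε)⟩
  · intro hζc ε hε
    have hcpt : IsCompact (frontier D) :=
      Metric.isCompact_of_isClosed_isBounded isClosed_frontier
        (hDb.closure.subset frontier_subset_closure)
    obtain ⟨B, hB⟩ := hcpt.exists_bound_of_continuousOn hζc
    have hosc : ∀ w ∈ frontier D, ∀ z ∈ frontier D, ‖|ζ z - ζ w|‖ ≤ 2 * B := fun w hw z hz =>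
      calc ‖|ζ z - ζ w|‖ = ‖ζ z - ζ w‖ := by rw [Real.norm_eq_abs, abs_abs, Real.norm_eq_abs]
        _ ≤ ‖ζ z‖ + ‖ζ w‖ := norm_sub_le _ _
        _ ≤ 2 * B := by linarith [hB z hz, hB w hw]
    have hM : ∀ w ∈ frontier D, ∫ z in frontier D, |ζ z - ζ w| ∂σ ≤ 2 * B * σ.real (frontier D) :=
      fun w hw => (le_abs_self _).trans
        (norm_setIntegral_le_of_norm_le_const (measure_lt_top _ _) (hosc w hw))
    have hmod : ∀ ε > 0, ∃ η > 0, ∀ w ∈ frontier D, ∀ z ∈ frontier D,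
        dist z w < η → |ζ z - ζ w| ≤ ε := fun ε hε => by
      obtain ⟨η, hη, h⟩ :=
        Metric.uniformContinuousOn_iff.1 (hcpt.uniformContinuousOn_of_continuous hζc) ε hε
      exact ⟨η, hη, fun w hw z hz hzw => (h z hz w hw hzw).le⟩
    exact hP.exists_pos_forall_abs_integral_mul_div_sub_le hD hC₁.le hζint subset_rfl hM hmod hε

/-- Boundary convergence of ratios of Poisson-type potentials: if the kernel `P` satisfies
`P(x,z) ≤ C₁ (δ_D(x)/|x−z|^d) Pσ(x)` and `δ_D(x) ∫_{∂D} |x−z|^{-d} dσ(z) ≤ C₂`, then for a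
`σ`-integrable boundary function `ζ`, at every continuity point `z₀` of `ζ` (relative to
`∂D`) one has `Pζ(x)/Pσ(x) → ζ(z₀)` as `D ∋ x → z₀`; if `ζ` is continuous on `∂D`, the
convergence is uniform over boundary points. -/
theorem stmt_6 (d : ℕ) (hd : 1 ≤ d)
    (D : Set (EuclideanSpace ℝ (Fin d))) (hD : IsOpen D) (hDne : D.Nonempty)
    (hDb : Bornology.IsBounded D)
    (σ : Measure (EuclideanSpace ℝ (Fin d))) [IsFiniteMeasure σ]
    (P : EuclideanSpace ℝ (Fin d) → EuclideanSpace ℝ (Fin d) → ℝ)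
    (hPmeas : Measurable (Function.uncurry P))
    (hPpos : ∀ x ∈ D, ∀ z ∈ frontier D, 0 < P x z)
    (hPint : ∀ x ∈ D, IntegrableOn (P x) (frontier D) σ)
    (hPσpos : ∀ x ∈ D, 0 < ∫ z in frontier D, P x z ∂σ)
    (C₁ C₂ : ℝ) (hC₁ : 0 < C₁) (hC₂ : 0 < C₂)
    (hker : ∀ x ∈ D, ∀ z ∈ frontier D,
      P x z ≤ C₁ * (infDist x Dᶜ / dist x z ^ d) * ∫ w in frontier D, P x w ∂σ)
    (hσbound : ∀ x ∈ D,
      ENNReal.ofReal (infDist x Dᶜ) *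
          ∫⁻ z in frontier D, ENNReal.ofReal (1 / dist x z ^ d) ∂σ ≤ ENNReal.ofReal C₂)
    (ζ : EuclideanSpace ℝ (Fin d) → ℝ) (hζint : IntegrableOn ζ (frontier D) σ)
    (z₀ : EuclideanSpace ℝ (Fin d)) (hz₀ : z₀ ∈ frontier D)
    (hζcont : ContinuousWithinAt ζ (frontier D) z₀) :
    Tendsto (fun x => (∫ z in frontier D, P x z * ζ z ∂σ) / ∫ z in frontier D, P x z ∂σ)
      (nhdsWithin z₀ D) (nhds (ζ z₀)) ∧
    (ContinuousOn ζ (frontier D) → ∀ ε : ℝ, 0 < ε → ∃ r : ℝ, 0 < r ∧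
      ∀ w ∈ frontier D, ∀ x ∈ D, dist x w < r →
        |(∫ z in frontier D, P x z * ζ z ∂σ) / (∫ z in frontier D, P x z ∂σ) - ζ w| ≤ ε) :=
  stmt_6_general d D hD hDb σ P hPpos hPint hPσpos C₁ hC₁ hker ζ hζint z₀ hz₀ hζcont
end

section
/- Let d ≥ 1 and let D ⊂ ℝ^d be a nonempty bounded open set. Let V : (0,∞) → (0,∞) be nondecreasing with V(2t) ≤ C_V V(t) for all t > 0 and some C_V ≥ 1, and let ψ : (0,∞) → (0,∞) be nondecreasing such that r ↦ r² ψ(r^{-2}) is nondecreasing on (0,∞). Let σ be a finite Borel measure on ∂D such that for some c₃, c₄ > 0 and every x ∈ D: ∫_{{z ∈ ∂D : |x−z| ≤ 2 δ_D(x)}} |x−z|^{-d} dσ(z) ≥ c₃ δ_D(x)^{-1} and ∫_{∂D} |x−z|^{-d} dσ(z) ≤ c₄ δ_D(x)^{-1}. Let P : D × ∂D → (0,∞) satisfy c₁ F(x,z) ≤ P(x,z) ≤ c₂ F(x,z) for some c₁, c₂ > 0, where F(x,z) := V(δ_D(x)) / ( V(|x−z|)² |x−z|^d ψ(V(|x−z|)^{-2})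 ). Then there exists C ≥ 1 such that for every x ∈ D: C⁻¹ ( δ_D(x) V(δ_D(x)) ψ(V(δ_D(x))^{-2}) )^{-1} ≤ ∫_{∂D} P(x,z) dσ(z) ≤ C ( δ_D(x) V(δ_D(x)) ψ(V(δ_D(x))^{-2}) )^{-1}. -/
open Real MeasureTheory Metric

/-- Sharp two-sided bound for the Poisson potential of the boundary measure `σ`: if
`P(x,z) ≍ V(δ_D(x)) / (V(|x−z|)² |x−z|^d ψ(V(|x−z|)⁻²))` and `σ` behaves like the surface
measure, then `∫_{∂D} P(x,z) dσ(z) ≍ ( δ_D(x) V(δ_D(x)) ψ(V(δ_D(x))⁻²) )⁻¹` on `D`. -/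
theorem stmt_7 (d : ℕ) (hd : 1 ≤ d)
    (D : Set (EuclideanSpace ℝ (Fin d))) (hD : IsOpen D) (hDne : D.Nonempty)
    (hDb : Bornology.IsBounded D)
    (V ψ : ℝ → ℝ) (CV : ℝ) (hCV : 1 ≤ CV)
    (hVpos : ∀ t : ℝ, 0 < t → 0 < V t) (hVmono : MonotoneOn V (Set.Ioi 0))
    (hVdoub : ∀ t : ℝ, 0 < t → V (2 * t) ≤ CV * V t)
    (hψpos : ∀ t : ℝ, 0 < t → 0 < ψ t) (hψmono : MonotoneOn ψ (Set.Ioi 0))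
    (hgmono : MonotoneOn (fun r : ℝ => r ^ 2 * ψ (1 / r ^ 2)) (Set.Ioi 0))
    (σ : Measure (EuclideanSpace ℝ (Fin d))) [IsFiniteMeasure σ]
    (c₁ c₂ c₃ c₄ : ℝ) (hc₁ : 0 < c₁) (hc₂ : 0 < c₂) (hc₃ : 0 < c₃) (hc₄ : 0 < c₄)
    (hσlow : ∀ x ∈ D,
      ENNReal.ofReal (c₃ / infDist x Dᶜ) ≤
        ∫⁻ z in frontier D ∩ {z | dist x z ≤ 2 * infDist x Dᶜ},
          ENNReal.ofReal (1 / dist x z ^ d) ∂σ)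
    (hσup : ∀ x ∈ D,
      (∫⁻ z in frontier D, ENNReal.ofReal (1 / dist x z ^ d) ∂σ) ≤
        ENNReal.ofReal (c₄ / infDist x Dᶜ))
    (P : EuclideanSpace ℝ (Fin d) → EuclideanSpace ℝ (Fin d) → ℝ)
    (hP : ∀ x ∈ D, ∀ z ∈ frontier D,
      c₁ * (V (infDist x Dᶜ) /
          (V (dist x z) ^ 2 * dist x z ^ d * ψ (1 / V (dist x z) ^ 2))) ≤ P x z ∧
      P x z ≤ c₂ * (V (infDist x Dᶜ) /
          (V (dist x z) ^ 2 * dist x z ^ d * ψ (1 / V (dist x z) ^ 2)))) :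
    ∃ C : ℝ, 1 ≤ C ∧ ∀ x ∈ D,
      ENNReal.ofReal (C⁻¹ /
          (infDist x Dᶜ * V (infDist x Dᶜ) * ψ (1 / V (infDist x Dᶜ) ^ 2))) ≤
        (∫⁻ z in frontier D, ENNReal.ofReal (P x z) ∂σ) ∧
      (∫⁻ z in frontier D, ENNReal.ofReal (P x z) ∂σ) ≤
        ENNReal.ofReal (C /
          (infDist x Dᶜ * V (infDist x Dᶜ) * ψ (1 / V (infDist x Dᶜ) ^ 2))) := by
  have hCVpos : (0:ℝ) < CV := lt_of_lt_of_le one_pos hCV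
  set C : ℝ := max (max (c₂ * c₄) (CV ^ 2 / (c₁ * c₃))) 1 with hCdef
  have hC1 : (1:ℝ) ≤ C := le_max_right _ _
  have hCpos : (0:ℝ) < C := lt_of_lt_of_le one_pos hC1
  refine ⟨C, hC1, fun x hx => ?_⟩
  -- the complement of D is nonempty
  have hDcne : (Dᶜ : Set (EuclideanSpace ℝ (Fin d))).Nonempty := by
    obtain ⟨R, hR⟩ := hDb.subset_closedBall x
    refine ⟨x + EuclideanSpace.single ⟨0, hd⟩ (|R| + 1), fun hmem => ?_⟩
    have h0 := hR hmem
    rw [mem_closedBall, dist_eq_norm, add_sub_cancel_left, EuclideanSpace.norm_single,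
      Real.norm_eq_abs, abs_of_nonneg (by positivity : (0:ℝ) ≤ |R| + 1)] at h0
    have h1 : R < |R| + 1 := lt_of_le_of_lt (le_abs_self R) (by linarith)
    linarith
  have hxD : x ∉ (Dᶜ : Set (EuclideanSpace ℝ (Fin d))) := fun h => h hx
  have hδ : 0 < infDist x Dᶜ := (hD.isClosed_compl.notMem_iff_infDist_pos hDcne).1 hxD
  set δ := infDist x Dᶜ with hδdef
  have hVδ : 0 < V δ := hVpos δ hδ
  have hψδ : 0 < ψ (1 / V δ ^ 2) := hψpos _ (by positivity)
  have hQ : 0 < δ * V δ * ψ (1 / V δ ^ 2) := by positivity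
  -- points of the frontier lie in Dᶜ, so dist x z ≥ δ
  have hfrc : frontier D ⊆ Dᶜ := by
    rw [hD.frontier_eq]; exact fun z hz => hz.2
  have hzd : ∀ z ∈ frontier D, δ ≤ dist x z := fun z hz =>
    infDist_le_dist_of_mem (hfrc hz)
  -- pointwise bounds
  have key : ∀ z ∈ frontier D,
      (c₁ * (V δ / (CV ^ 2 * (V δ ^ 2 * ψ (1 / V δ ^ 2))))) * (1 / dist x z ^ d) *
          (if dist x z ≤ 2 * δ then 1 else 0) ≤ P x z ∧
      P x z ≤ (c₂ * (V δ / (V δ ^ 2 * ψ (1 / V δ ^ 2)))) * (1 / dist x z ^ d) := by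
    intro z hz
    set r := dist x z with hr
    have hrδ : δ ≤ r := hzd z hz
    have hrpos : 0 < r := lt_of_lt_of_le hδ hrδ
    have hVr : 0 < V r := hVpos r hrpos
    have hψr : 0 < ψ (1 / V r ^ 2) := hψpos _ (by positivity)
    have hVδr : V δ ≤ V r := hVmono hδ hrpos hrδ
    have hGlow : V δ ^ 2 * ψ (1 / V δ ^ 2) ≤ V r ^ 2 * ψ (1 / V r ^ 2) :=
      hgmono (Set.mem_Ioi.2 hVδ) (Set.mem_Ioi.2 hVr) hVδr
    constructor
    · by_cases h2 : r ≤ 2 * δ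
      · simp only [if_pos h2, mul_one]
        have hV2 : V r ≤ CV * V δ := le_trans (hVmono (Set.mem_Ioi.2 hrpos) (Set.mem_Ioi.2 (by positivity)) h2) (hVdoub δ hδ)
        have hGup1 : V r ^ 2 * ψ (1 / V r ^ 2) ≤ (CV * V δ) ^ 2 * ψ (1 / (CV * V δ) ^ 2) :=
          hgmono (Set.mem_Ioi.2 hVr) (Set.mem_Ioi.2 (by positivity)) hV2
        have hGup2 : (CV * V δ) ^ 2 * ψ (1 / (CV * V δ) ^ 2) ≤
            CV ^ 2 * (V δ ^ 2 * ψ (1 / V δ ^ 2)) := by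
          have : ψ (1 / (CV * V δ) ^ 2) ≤ ψ (1 / V δ ^ 2) := by
            apply hψmono (Set.mem_Ioi.2 (by positivity)) (Set.mem_Ioi.2 (by positivity))
            apply one_div_le_one_div_of_le (by positivity)
            have hCV2 : (1:ℝ) ≤ CV ^ 2 := by nlinarith
            nlinarith [sq_nonneg (V δ)]
          calc (CV * V δ) ^ 2 * ψ (1 / (CV * V δ) ^ 2)
              ≤ (CV * V δ) ^ 2 * ψ (1 / V δ ^ 2) := by
                apply mul_le_mul_of_nonneg_left this (by positivity)
            _ = CV ^ 2 * (V δ ^ 2 * ψ (1 / V δ ^ 2)) := by ring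
        have hGup : V r ^ 2 * ψ (1 / V r ^ 2) ≤ CV ^ 2 * (V δ ^ 2 * ψ (1 / V δ ^ 2)) :=
          hGup1.trans hGup2
        have step : (c₁ * (V δ / (CV ^ 2 * (V δ ^ 2 * ψ (1 / V δ ^ 2))))) * (1 / r ^ d)
            ≤ c₁ * (V δ / (V r ^ 2 * r ^ d * ψ (1 / V r ^ 2))) := by
          have e1 : (c₁ * (V δ / (CV ^ 2 * (V δ ^ 2 * ψ (1 / V δ ^ 2))))) * (1 / r ^ d)
              = (c₁ * V δ) / ((CV ^ 2 * (V δ ^ 2 * ψ (1 / V δ ^ 2))) * r ^ d) := by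
            field_simp
          have e2 : c₁ * (V δ / (V r ^ 2 * r ^ d * ψ (1 / V r ^ 2)))
              = (c₁ * V δ) / ((V r ^ 2 * ψ (1 / V r ^ 2)) * r ^ d) := by
            rw [mul_div_assoc']; ring_nf
          rw [e1, e2]
          gcongr
        exact step.trans (hP x hx z hz).1
      · simp only [if_neg h2, mul_zero]
        have := (hP x hx z hz).1
        have hpos : 0 < c₁ * (V δ / (V r ^ 2 * r ^ d * ψ (1 / V r ^ 2))) := by positivity
        linarith
    · have step : c₂ * (V δ / (V r ^ 2 * r ^ d * ψ (1 / V r ^ 2)))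
          ≤ (c₂ * (V δ / (V δ ^ 2 * ψ (1 / V δ ^ 2)))) * (1 / r ^ d) := by
        rw [show V r ^ 2 * r ^ d * ψ (1 / V r ^ 2)
            = (V r ^ 2 * ψ (1 / V r ^ 2)) * r ^ d by ring, ← div_div,
          mul_one_div, mul_div_assoc]
        gcongr
      exact (hP x hx z hz).2.trans step
  -- measurability of the sets
  have hfmeas : MeasurableSet (frontier D) := isClosed_frontier.measurableSet
  have hSeq : {z : EuclideanSpace ℝ (Fin d) | dist x z ≤ 2 * δ} = closedBall x (2 * δ) := by
    ext z; simp [mem_closedBall, dist_comm]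
  have hSmeas : MeasurableSet (frontier D ∩ {z | dist x z ≤ 2 * δ}) :=
    hfmeas.inter (hSeq ▸ measurableSet_closedBall)
  set K₁ : ℝ := c₁ * (V δ / (CV ^ 2 * (V δ ^ 2 * ψ (1 / V δ ^ 2)))) with hK₁
  set K₂ : ℝ := c₂ * (V δ / (V δ ^ 2 * ψ (1 / V δ ^ 2))) with hK₂
  have hK₁pos : 0 < K₁ := by positivity
  have hK₂pos : 0 < K₂ := by positivity
  constructor
  · -- lower bound
    calc ENNReal.ofReal (C⁻¹ / (δ * V δ * ψ (1 / V δ ^ 2)))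
        ≤ ENNReal.ofReal (K₁ * (c₃ / δ)) := by
          apply ENNReal.ofReal_le_ofReal
          have hCK : C⁻¹ ≤ c₁ * c₃ / CV ^ 2 := by
            have h1 : CV ^ 2 / (c₁ * c₃) ≤ C := le_max_left _ _ |>.trans' (le_max_right _ _)
            have h2 : 0 < CV ^ 2 / (c₁ * c₃) := by positivity
            calc C⁻¹ ≤ (CV ^ 2 / (c₁ * c₃))⁻¹ := by
                  apply inv_anti₀ h2 h1
              _ = c₁ * c₃ / CV ^ 2 := by field_simp
          calc C⁻¹ / (δ * V δ * ψ (1 / V δ ^ 2))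
              ≤ (c₁ * c₃ / CV ^ 2) / (δ * V δ * ψ (1 / V δ ^ 2)) := by gcongr
            _ = K₁ * (c₃ / δ) := by rw [hK₁]; field_simp
      _ ≤ ENNReal.ofReal K₁ * ENNReal.ofReal (c₃ / δ) := by
          rw [← ENNReal.ofReal_mul hK₁pos.le]
      _ ≤ ENNReal.ofReal K₁ *
            ∫⁻ z in frontier D ∩ {z | dist x z ≤ 2 * δ},
              ENNReal.ofReal (1 / dist x z ^ d) ∂σ := by
          exact mul_le_mul_right (hσlow x hx) _
      _ = ∫⁻ z in frontier D ∩ {z | dist x z ≤ 2 * δ},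
            ENNReal.ofReal K₁ * ENNReal.ofReal (1 / dist x z ^ d) ∂σ := by
          rw [lintegral_const_mul' _ _ ENNReal.ofReal_ne_top]
      _ ≤ ∫⁻ z in frontier D ∩ {z | dist x z ≤ 2 * δ}, ENNReal.ofReal (P x z) ∂σ := by
          apply lintegral_mono_ae
          apply ae_restrict_of_forall_mem hSmeas
          intro z hz
          rw [← ENNReal.ofReal_mul hK₁pos.le]
          apply ENNReal.ofReal_le_ofReal
          have := (key z hz.1).1
          have h2 : dist x z ≤ 2 * δ := hz.2
          rw [if_pos h2, mul_one] at this
          exact this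
      _ ≤ ∫⁻ z in frontier D, ENNReal.ofReal (P x z) ∂σ :=
          lintegral_mono_set Set.inter_subset_left
  · -- upper bound
    calc ∫⁻ z in frontier D, ENNReal.ofReal (P x z) ∂σ
        ≤ ∫⁻ z in frontier D,
            ENNReal.ofReal K₂ * ENNReal.ofReal (1 / dist x z ^ d) ∂σ := by
          apply lintegral_mono_ae
          apply ae_restrict_of_forall_mem hfmeas
          intro z hz
          rw [← ENNReal.ofReal_mul hK₂pos.le]
          exact ENNReal.ofReal_le_ofReal (key z hz).2
      _ = ENNReal.ofReal K₂ *
            ∫⁻ z in frontier D, ENNReal.ofReal (1 / dist x z ^ d) ∂σ := by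
          rw [lintegral_const_mul' _ _ ENNReal.ofReal_ne_top]
      _ ≤ ENNReal.ofReal K₂ * ENNReal.ofReal (c₄ / δ) :=
          mul_le_mul_right (hσup x hx) _
      _ = ENNReal.ofReal (K₂ * (c₄ / δ)) := by
          rw [← ENNReal.ofReal_mul hK₂pos.le]
      _ ≤ ENNReal.ofReal (C / (δ * V δ * ψ (1 / V δ ^ 2))) := by
          apply ENNReal.ofReal_le_ofReal
          have hCc : c₂ * c₄ ≤ C := (le_max_left _ _).trans (le_max_left _ _)
          calc K₂ * (c₄ / δ) = (c₂ * c₄) / (δ * V δ * ψ (1 / V δ ^ 2)) := by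
                rw [hK₂]; field_simp
            _ ≤ C / (δ * V δ * ψ (1 / V δ ^ 2)) := by gcongr
end

section
/- Let d ≥ 1 and let D ⊂ ℝ^d be a nonempty bounded open set with diam D ≤ 1. Let V : (0,1] → (0,1] be nondecreasing and satisfy the lower weak scaling condition at zero with constant ã₁ > 0 and exponent δ̲_V > 0, and let ψ : [1,∞) → (0,∞) be measurable and satisfy the lower weak scaling condition at infinity with constant a̲ > 0 and exponent δ̲_ψ ∈ (0,1). Then there exists C > 0 such that for every z ∈ ∂D: ∫_D V(δ_D(x))² / ( V(|x−z|)² |x−z|^d ψ(V(|x−z|)^{-2}) ) dx ≤ C, where the integral is with respect to Lebesgue measure on D. -/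
/-!
Since `V` is nondecreasing and `δ_D(x) ≤ |x - z| ≤ diam D ≤ 1`, the integrand is at most
`1 / (r ^ d ψ(V(r)⁻²))` with `r = |x - z|`. Lower scaling of `V` between `r` and `1` gives
`V(r) ≤ r ^ δV / a₁`, and lower scaling of `ψ` between `1` and `V(r)⁻²` then gives
`ψ(V(r)⁻²) ≳ r ^ (-2 δV δψ)`. So the integrand is `O(|x - z| ^ (2 δV δψ - d))`, which is integrable
on `B(z, 2) ⊇ D`, with an integral independent of `z` by translation invariance.
-/

open Real MeasureTheory Metric

theorem setLIntegral_ball_comp_dist_eq {E : Type*} [NormedAddCommGroup E] [MeasurableSpace E]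
    [BorelSpace E] (μ : Measure E) [μ.IsAddRightInvariant] (g : ℝ → ENNReal) (z : E) (r : ℝ) :
    ∫⁻ x in ball z r, g (dist x z) ∂μ = ∫⁻ x in ball 0 r, g ‖x‖ ∂μ := by
  rw [← lintegral_indicator measurableSet_ball, ← lintegral_indicator measurableSet_ball,
    ← lintegral_sub_right_eq_self ((ball (0 : E) r).indicator fun x => g ‖x‖) z]
  congr with x
  simp only [Set.indicator, mem_ball, dist_eq_norm, sub_zero]

theorem lintegral_ball_rpow_norm_lt_top {E : Type*} [NormedAddCommGroup E] [NormedSpace ℝ E]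
    [FiniteDimensional ℝ E] [MeasurableSpace E] [BorelSpace E] (μ : Measure E)
    [μ.IsAddHaarMeasure] (hd : 1 ≤ Module.finrank ℝ E) {α : ℝ} (hα : α < Module.finrank ℝ E)
    (r : ℝ) :
    ∫⁻ x in ball (0 : E) r, ENNReal.ofReal (‖x‖ ^ (-α)) ∂μ < ⊤ := by
  refine (integrableOn_ball_of_norm_le_rpow (C := 1) hd hα (ae_of_all _ fun x => ?_)
    ?_).lintegral_lt_top
  · rw [one_mul, Real.norm_of_nonneg (by positivity)]
  · exact (measurable_norm.pow_const _).aestronglyMeasurable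

theorem mul_rpow_neg_le_inv_of_lowerScaling {V : ℝ → ℝ} {a₁ δV r : ℝ}
    (hV1 : V 1 ≤ 1) (hVr : 0 < V r) (hr0 : 0 < r)
    (hscale : a₁ * (1 / r) ^ δV ≤ V 1 / V r) :
    a₁ * r ^ (-δV) ≤ (V r)⁻¹ := by
  rw [rpow_neg hr0.le, ← inv_rpow hr0.le, ← one_div]
  exact hscale.trans (by rw [div_eq_mul_inv]; exact mul_le_of_le_one_left (by positivity) hV1)

theorem mul_rpow_neg_le_psi_inv_sq {ψ V : ℝ → ℝ} {a δψ a₁ δV r : ℝ}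
    (ha : 0 ≤ a) (hδψ : 0 ≤ δψ) (ha₁ : 0 ≤ a₁) (hr0 : 0 < r) (hψ1 : 0 ≤ ψ 1)
    (hψscale : ∀ lam t : ℝ, 1 ≤ lam → 1 ≤ t → a * lam ^ δψ * ψ t ≤ ψ (lam * t))
    (hVr : 0 < V r) (hVr1 : V r ≤ 1) (hV : a₁ * r ^ (-δV) ≤ (V r)⁻¹) :
    a * ψ 1 * a₁ ^ (2 * δψ) * r ^ (-(2 * δV * δψ)) ≤ ψ (1 / V r ^ 2) := by
  have hlam : 1 ≤ 1 / V r ^ 2 := one_le_one_div (by positivity) (pow_le_one₀ hVr.le hVr1)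
  have hbase : (a₁ * r ^ (-δV)) ^ 2 ≤ 1 / V r ^ 2 := by
    rw [one_div, ← inv_pow]
    exact pow_le_pow_left₀ (by positivity) hV 2
  calc a * ψ 1 * a₁ ^ (2 * δψ) * r ^ (-(2 * δV * δψ))
      = a * ((a₁ * r ^ (-δV)) ^ 2) ^ δψ * ψ 1 := by
        rw [← rpow_natCast, ← rpow_mul (by positivity), mul_rpow ha₁ (by positivity),
          ← rpow_mul hr0.le]
        push_cast
        ring_nf
    _ ≤ a * (1 / V r ^ 2) ^ δψ * ψ 1 := by gcongr
    _ ≤ ψ (1 / V r ^ 2) := by simpa using hψscale _ 1 hlam le_rfl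

/-- `V(δ_D(x)) F(x, z)` with `δ = δ_D(x)` and `r = |x - z|`. -/
noncomputable def poissonProfile (V ψ : ℝ → ℝ) (d : ℕ) (δ r : ℝ) : ℝ :=
  V δ ^ 2 / (V r ^ 2 * r ^ d * ψ (1 / V r ^ 2))

theorem poissonProfile_le {ψ V : ℝ → ℝ} {a δψ a₁ δV δ r : ℝ} (d : ℕ)
    (ha : 0 < a) (hδψ : 0 < δψ) (ha₁ : 0 < a₁)
    (hψpos : ∀ t : ℝ, 1 ≤ t → 0 < ψ t)
    (hψscale : ∀ lam t : ℝ, 1 ≤ lam → 1 ≤ t → a * lam ^ δψ * ψ t ≤ ψ (lam * t))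
    (hVrange : ∀ t : ℝ, 0 < t → t ≤ 1 → 0 < V t ∧ V t ≤ 1)
    (hVmono : ∀ s t : ℝ, 0 < s → s ≤ t → t ≤ 1 → V s ≤ V t)
    (hVscale : ∀ s t : ℝ, 0 < s → s ≤ t → t ≤ 1 → a₁ * (t / s) ^ δV ≤ V t / V s)
    (hδ0 : 0 < δ) (hδr : δ ≤ r) (hr1 : r ≤ 1) :
    poissonProfile V ψ d δ r ≤ (a * ψ 1 * a₁ ^ (2 * δψ))⁻¹ * r ^ (2 * δV * δψ - d) := by
  have hr0 : 0 < r := hδ0.trans_le hδr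
  obtain ⟨hVr, hVr1⟩ := hVrange r hr0 hr1
  have hψ1 : 0 < ψ 1 := hψpos 1 le_rfl
  have hψ := mul_rpow_neg_le_psi_inv_sq ha.le hδψ.le ha₁.le hr0 hψ1.le hψscale hVr hVr1
    (mul_rpow_neg_le_inv_of_lowerScaling (hVrange 1 one_pos le_rfl).2 hVr hr0
      (hVscale r 1 hr0 hr1 le_rfl))
  have hVδ : V δ ^ 2 ≤ V r ^ 2 :=
    pow_le_pow_left₀ (hVrange δ hδ0 (hδr.trans hr1)).1.le (hVmono δ r hδ0 hδr hr1) 2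
  calc poissonProfile V ψ d δ r
      ≤ V r ^ 2 / (V r ^ 2 * r ^ d * (a * ψ 1 * a₁ ^ (2 * δψ) * r ^ (-(2 * δV * δψ)))) := by
        unfold poissonProfile
        gcongr
    _ = (a * ψ 1 * a₁ ^ (2 * δψ))⁻¹ * r ^ (2 * δV * δψ - d) := by
        rw [rpow_sub hr0, rpow_neg hr0.le, rpow_natCast]
        field_simp

theorem dist_le_diam_of_mem_frontier {X : Type*} [PseudoMetricSpace X] {D : Set X}
    (hDb : Bornology.IsBounded D) {x z : X} (hx : x ∈ D) (hz : z ∈ frontier D) :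
    dist x z ≤ diam D :=
  diam_closure D ▸ dist_le_diam_of_mem hDb.closure (subset_closure hx) (frontier_subset_closure hz)

theorem IsOpen.infDist_compl_pos_of_mem_frontier {X : Type*} [PseudoMetricSpace X] {D : Set X}
    (hD : IsOpen D) {x z : X} (hx : x ∈ D) (hz : z ∈ frontier D) :
    0 < infDist x Dᶜ ∧ infDist x Dᶜ ≤ dist x z := by
  have hzD : z ∈ Dᶜ := (hD.frontier_eq ▸ hz).2
  exact ⟨(hD.isClosed_compl.notMem_iff_infDist_pos ⟨z, hzD⟩).1 (not_not.2 hx),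
    infDist_le_dist_of_mem hzD⟩

theorem stmt_8_general (d : ℕ) (hd : 1 ≤ d)
    (D : Set (EuclideanSpace ℝ (Fin d))) (hD : IsOpen D)
    (hDb : Bornology.IsBounded D) (hdiam : Metric.diam D ≤ 1)
    (ψ V : ℝ → ℝ) (a δψ a₁ δV : ℝ)
    (ha : 0 < a) (hδψ : 0 < δψ) (ha₁ : 0 < a₁) (hδV : 0 < δV)
    (hψpos : ∀ t : ℝ, 1 ≤ t → 0 < ψ t)
    (hψscale : ∀ lam t : ℝ, 1 ≤ lam → 1 ≤ t → a * lam ^ δψ * ψ t ≤ ψ (lam * t))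
    (hVrange : ∀ t : ℝ, 0 < t → t ≤ 1 → 0 < V t ∧ V t ≤ 1)
    (hVmono : ∀ s t : ℝ, 0 < s → s ≤ t → t ≤ 1 → V s ≤ V t)
    (hVscale : ∀ s t : ℝ, 0 < s → s ≤ t → t ≤ 1 → a₁ * (t / s) ^ δV ≤ V t / V s) :
    ∃ C : ℝ, 0 < C ∧ ∀ z ∈ frontier D,
      (∫⁻ x in D, ENNReal.ofReal
          (V (infDist x Dᶜ) ^ 2 /
            (V (dist x z) ^ 2 * dist x z ^ d * ψ (1 / V (dist x z) ^ 2)))) ≤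
        ENNReal.ofReal C := by
  set c : ENNReal := ENNReal.ofReal (a * ψ 1 * a₁ ^ (2 * δψ))⁻¹
  set M : ENNReal := ∫⁻ x in ball (0 : EuclideanSpace ℝ (Fin d)) 2,
    ENNReal.ofReal (‖x‖ ^ (2 * δV * δψ - d))
  have hM : M < ⊤ := by
    simpa only [neg_sub] using lintegral_ball_rpow_norm_lt_top volume (by simpa using hd)
      (α := d - 2 * δV * δψ) (by simp [hδV, hδψ]) 2
  refine ⟨(c * M).toReal + 1, add_pos_of_nonneg_of_pos ENNReal.toReal_nonneg one_pos,
    fun z hz => ?_⟩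
  have hdist : ∀ x ∈ D, dist x z ≤ 1 := fun x hx =>
    (dist_le_diam_of_mem_frontier hDb hx hz).trans hdiam
  calc (∫⁻ x in D, ENNReal.ofReal (poissonProfile V ψ d (infDist x Dᶜ) (dist x z)))
      ≤ ∫⁻ x in D, c * ENNReal.ofReal (dist x z ^ (2 * δV * δψ - d)) := by
        refine setLIntegral_mono' hD.measurableSet fun x hx => ?_
        obtain ⟨hδ0, hδr⟩ := hD.infDist_compl_pos_of_mem_frontier hx hz
        rw [← ENNReal.ofReal_mul' (by positivity)]
        exact ENNReal.ofReal_le_ofReal (poissonProfile_le d ha hδψ ha₁ hψpos hψscale hVrange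
          hVmono hVscale hδ0 hδr (hdist x hx))
    _ ≤ ∫⁻ x in ball z 2, c * ENNReal.ofReal (dist x z ^ (2 * δV * δψ - d)) :=
        lintegral_mono_set fun x hx => mem_ball.2 ((hdist x hx).trans_lt one_lt_two)
    _ = c * M := by
        rw [lintegral_const_mul' _ _ ENNReal.ofReal_ne_top,
          setLIntegral_ball_comp_dist_eq volume (fun r => ENNReal.ofReal (r ^ (2 * δV * δψ - d)))]
    _ ≤ ENNReal.ofReal ((c * M).toReal + 1) := by
        rw [← ENNReal.ofReal_toReal (ENNReal.mul_ne_top ENNReal.ofReal_ne_top hM.ne)]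
        exact ENNReal.ofReal_le_ofReal (by simp)

/-- Integrability of the Poisson kernel profile against the weight `V(δ_D)`: for a bounded
open set `D ⊂ ℝ^d` with `diam D ≤ 1`, under lower weak scaling conditions on `ψ` and `V`,
`∫_D V(δ_D(x))² / ( V(|x−z|)² |x−z|^d ψ(V(|x−z|)⁻²) ) dx` is bounded uniformly in
`z ∈ ∂D`. -/
theorem stmt_8 (d : ℕ) (hd : 1 ≤ d)
    (D : Set (EuclideanSpace ℝ (Fin d))) (hD : IsOpen D) (hDne : D.Nonempty)
    (hDb : Bornology.IsBounded D) (hdiam : Metric.diam D ≤ 1)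
    (ψ V : ℝ → ℝ) (a δψ a₁ δV : ℝ)
    (ha : 0 < a) (hδψ : 0 < δψ) (hδψ1 : δψ < 1) (ha₁ : 0 < a₁) (hδV : 0 < δV)
    (hψmeas : Measurable ψ) (hψpos : ∀ t : ℝ, 1 ≤ t → 0 < ψ t)
    (hψscale : ∀ lam t : ℝ, 1 ≤ lam → 1 ≤ t → a * lam ^ δψ * ψ t ≤ ψ (lam * t))
    (hVrange : ∀ t : ℝ, 0 < t → t ≤ 1 → 0 < V t ∧ V t ≤ 1)
    (hVmono : ∀ s t : ℝ, 0 < s → s ≤ t → t ≤ 1 → V s ≤ V t)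
    (hVscale : ∀ s t : ℝ, 0 < s → s ≤ t → t ≤ 1 → a₁ * (t / s) ^ δV ≤ V t / V s) :
    ∃ C : ℝ, 0 < C ∧ ∀ z ∈ frontier D,
      (∫⁻ x in D, ENNReal.ofReal
          (V (infDist x Dᶜ) ^ 2 /
            (V (dist x z) ^ 2 * dist x z ^ d * ψ (1 / V (dist x z) ^ 2)))) ≤
        ENNReal.ofReal C :=
  stmt_8_general d hd D hD hDb hdiam ψ V a δψ a₁ δV ha hδψ ha₁ hδV hψpos hψscale hVrange hVmono
    hVscale
end

section
/- Let R > 0, let V : (0,R] → (0,∞) be nondecreasing, let ψ : (0,∞) → (0,∞) be such that r ↦ r² ψ(r^{-2}) is nondecreasing on (0,∞), and let U : (0,R] → [0,∞) be measurable with ∫_0^R U(t) V(t) dt < ∞. Then lim_{δ → 0^+} [ ∫_0^δ U(t) V(t) dt + δ V(δ)² ψ(V(δ)^{-2}) ( 1 + ∫_δ^R U(t) / ( t V(t) ψ(V(t)^{-2}) ) dt ) ] = 0. Equivalently, writing H_U(δ) := ( δ V(δ) ψ(V(δ)^{-2}) )^{-1} ∫_0^δ U(t) V(t) dt + V(δ)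 ( 1 + ∫_δ^R U(t) / ( t V(t) ψ(V(t)^{-2}) ) dt ), one has lim_{δ → 0^+} δ V(δ) ψ(V(δ)^{-2}) H_U(δ) = 0. -/
open Real MeasureTheory Filter

/-- The Poisson potential rate annihilates Green potentials at the boundary: if
`∫_0^R U V < ∞`, `V` is nondecreasing and positive on `(0,R]`, and `r ↦ r² ψ(r⁻²)` is
nondecreasing, then
`∫_0^δ U V + δ V(δ)² ψ(V(δ)⁻²) (1 + ∫_δ^R U/(t V ψ(V⁻²))) → 0` as `δ → 0⁺`; equivalently,
`δ V(δ) ψ(V(δ)⁻²) H_U(δ) → 0`. -/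
theorem stmt_10 (R : ℝ) (hR : 0 < R) (V ψ U : ℝ → ℝ)
    (hVpos : ∀ t : ℝ, 0 < t → t ≤ R → 0 < V t)
    (hVmono : ∀ s t : ℝ, 0 < s → s ≤ t → t ≤ R → V s ≤ V t)
    (hψpos : ∀ t : ℝ, 0 < t → 0 < ψ t)
    (hgmono : MonotoneOn (fun r : ℝ => r ^ 2 * ψ (1 / r ^ 2)) (Set.Ioi 0))
    (hUmeas : Measurable U) (hUnonneg : ∀ t : ℝ, 0 < t → t ≤ R → 0 ≤ U t)
    (hUV : IntegrableOn (fun t => U t * V t) (Set.Ioc 0 R)) :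
    Tendsto (fun δ : ℝ =>
        (∫ t in Set.Ioc (0 : ℝ) δ, U t * V t) +
          δ * V δ ^ 2 * ψ (1 / V δ ^ 2) *
            (1 + ∫ t in Set.Ioc δ R, U t / (t * V t * ψ (1 / V t ^ 2))))
      (nhdsWithin 0 (Set.Ioi 0)) (nhds 0) ∧
    Tendsto (fun δ : ℝ =>
        δ * V δ * ψ (1 / V δ ^ 2) *
          ((δ * V δ * ψ (1 / V δ ^ 2))⁻¹ * (∫ t in Set.Ioc (0 : ℝ) δ, U t * V t) +
            V δ * (1 + ∫ t in Set.Ioc δ R, U t / (t * V t * ψ (1 / V t ^ 2)))))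
      (nhdsWithin 0 (Set.Ioi 0)) (nhds 0) := by
  have hmem : Set.Ioc (0 : ℝ) R ∈ nhdsWithin (0 : ℝ) (Set.Ioi 0) :=
    Ioc_mem_nhdsGT_of_mem ⟨le_refl 0, hR⟩
  have hVR : 0 < V R := hVpos R hR le_rfl
  -- first piece : ∫_0^δ U V → 0
  have hA0 : Tendsto (fun δ : ℝ => ∫ t : ℝ, (Set.Ioc (0 : ℝ) δ).indicator
        (fun s => U s * V s) t) (nhdsWithin (0 : ℝ) (Set.Ioi 0)) (nhds (∫ _ : ℝ, (0 : ℝ))) := by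
    refine tendsto_integral_filter_of_dominated_convergence
      ((Set.Ioc (0 : ℝ) R).indicator (fun s => ‖U s * V s‖)) ?_ ?_ ?_ ?_
    · filter_upwards [hmem] with δ hδ
      rw [aestronglyMeasurable_indicator_iff measurableSet_Ioc]
      exact hUV.aestronglyMeasurable.mono_measure
        (Measure.restrict_mono (Set.Ioc_subset_Ioc le_rfl hδ.2) le_rfl)
    · filter_upwards [hmem] with δ hδ
      refine ae_of_all _ fun t => ?_
      by_cases ht : t ∈ Set.Ioc (0 : ℝ) δ
      · rw [Set.indicator_of_mem ht, Set.indicator_of_mem (Set.Ioc_subset_Ioc le_rfl hδ.2 ht)]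
      · rw [Set.indicator_of_notMem ht, norm_zero]
        exact Set.indicator_nonneg (fun s _ => norm_nonneg _) t
    · exact IntegrableOn.integrable_indicator (hUV.norm) measurableSet_Ioc
    · refine ae_of_all _ fun t => ?_
      rcases le_or_gt t 0 with ht | ht
      · have h0 : ∀ δ : ℝ, (Set.Ioc (0 : ℝ) δ).indicator (fun s => U s * V s) t = 0 :=
          fun δ => Set.indicator_of_notMem (fun h => absurd h.1 (not_lt.2 ht)) _
        simp only [h0]
        exact tendsto_const_nhds
      · refine Tendsto.congr' ?_ tendsto_const_nhds
        filter_upwards [Ioo_mem_nhdsGT_of_mem ⟨le_refl (0 : ℝ), ht⟩] with δ hδ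
        exact (Set.indicator_of_notMem (fun h => absurd h.2 (not_le.2 hδ.2)) _).symm
  have hA : Tendsto (fun δ : ℝ => ∫ t in Set.Ioc (0 : ℝ) δ, U t * V t)
      (nhdsWithin (0 : ℝ) (Set.Ioi 0)) (nhds 0) := by
    simpa [integral_indicator measurableSet_Ioc] using hA0
  -- third piece : ∫_δ^R (δ/t) U V → 0
  have hT0 : Tendsto (fun δ : ℝ => ∫ t : ℝ, (Set.Ioc δ R).indicator
        (fun s => δ / s * (U s * V s)) t) (nhdsWithin (0 : ℝ) (Set.Ioi 0))
      (nhds (∫ _ : ℝ, (0 : ℝ))) := by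
    refine tendsto_integral_filter_of_dominated_convergence
      ((Set.Ioc (0 : ℝ) R).indicator (fun s => ‖U s * V s‖)) ?_ ?_ ?_ ?_
    · filter_upwards [hmem] with δ hδ
      rw [aestronglyMeasurable_indicator_iff measurableSet_Ioc]
      exact ((measurable_const.div measurable_id).aestronglyMeasurable).mul
        (hUV.aestronglyMeasurable.mono_measure
          (Measure.restrict_mono (Set.Ioc_subset_Ioc hδ.1.le le_rfl) le_rfl))
    · filter_upwards [hmem] with δ hδ
      refine ae_of_all _ fun t => ?_
      by_cases ht : t ∈ Set.Ioc δ R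
      · have ht0 : 0 < t := hδ.1.trans ht.1
        rw [Set.indicator_of_mem ht,
          Set.indicator_of_mem (show t ∈ Set.Ioc (0 : ℝ) R from ⟨ht0, ht.2⟩), norm_mul]
        have h1 : ‖δ / t‖ ≤ 1 := by
          rw [Real.norm_eq_abs, abs_of_nonneg (div_nonneg hδ.1.le ht0.le), div_le_one ht0]
          exact ht.1.le
        exact mul_le_of_le_one_left (norm_nonneg _) h1
      · rw [Set.indicator_of_notMem ht, norm_zero]
        exact Set.indicator_nonneg (fun s _ => norm_nonneg _) t
    · exact IntegrableOn.integrable_indicator (hUV.norm) measurableSet_Ioc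
    · refine ae_of_all _ fun t => ?_
      rcases le_or_gt t 0 with ht | ht
      · refine Tendsto.congr' ?_ tendsto_const_nhds
        filter_upwards [self_mem_nhdsWithin] with δ hδ
        exact (Set.indicator_of_notMem
          (fun h => absurd (hδ.trans h.1) (not_lt.2 ht)) _).symm
      · refine squeeze_zero_norm' (a := fun δ : ℝ => δ * (‖U t * V t‖ / t)) ?_ ?_
        · filter_upwards [self_mem_nhdsWithin] with δ hδ
          replace hδ : (0 : ℝ) < δ := hδ
          by_cases htm : t ∈ Set.Ioc δ R
          · rw [Set.indicator_of_mem htm, norm_mul, Real.norm_eq_abs (δ / t),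
              abs_of_nonneg (div_nonneg hδ.le ht.le)]
            exact le_of_eq (by ring)
          · rw [Set.indicator_of_notMem htm, norm_zero]
            positivity
        · have h1 : Tendsto (fun δ : ℝ => δ * (‖U t * V t‖ / t)) (nhds 0)
              (nhds (0 * (‖U t * V t‖ / t))) := tendsto_id.mul_const _
          rw [zero_mul] at h1
          exact h1.mono_left nhdsWithin_le_nhds
  have hT : Tendsto (fun δ : ℝ => ∫ t in Set.Ioc δ R, δ / t * (U t * V t))
      (nhdsWithin (0 : ℝ) (Set.Ioi 0)) (nhds 0) := by
    simpa [integral_indicator measurableSet_Ioc] using hT0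
  -- middle piece : δ * C → 0
  have hC : Tendsto (fun δ : ℝ => δ * (V R ^ 2 * ψ (1 / V R ^ 2)))
      (nhdsWithin (0 : ℝ) (Set.Ioi 0)) (nhds 0) := by
    have h1 : Tendsto (fun δ : ℝ => δ * (V R ^ 2 * ψ (1 / V R ^ 2))) (nhds 0)
        (nhds (0 * (V R ^ 2 * ψ (1 / V R ^ 2)))) := tendsto_id.mul_const _
    rw [zero_mul] at h1
    exact h1.mono_left nhdsWithin_le_nhds
  have hG : Tendsto (fun δ : ℝ => (∫ t in Set.Ioc (0 : ℝ) δ, U t * V t) +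
      (δ * (V R ^ 2 * ψ (1 / V R ^ 2)) + ∫ t in Set.Ioc δ R, δ / t * (U t * V t)))
      (nhdsWithin (0 : ℝ) (Set.Ioi 0)) (nhds 0) := by
    simpa using hA.add (hC.add hT)
  -- the first limit, by squeezing
  have first : Tendsto (fun δ : ℝ =>
      (∫ t in Set.Ioc (0 : ℝ) δ, U t * V t) +
        δ * V δ ^ 2 * ψ (1 / V δ ^ 2) *
          (1 + ∫ t in Set.Ioc δ R, U t / (t * V t * ψ (1 / V t ^ 2))))
      (nhdsWithin 0 (Set.Ioi 0)) (nhds 0) := by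
    refine squeeze_zero' ?_ ?_ hG
    · filter_upwards [hmem] with δ hδ
      have hVδ : 0 < V δ := hVpos δ hδ.1 hδ.2
      have hψδ : 0 < ψ (1 / V δ ^ 2) := hψpos _ (one_div_pos.2 (pow_pos hVδ 2))
      have h1 : 0 ≤ ∫ t in Set.Ioc (0 : ℝ) δ, U t * V t :=
        setIntegral_nonneg measurableSet_Ioc fun t ht =>
          mul_nonneg (hUnonneg t ht.1 (ht.2.trans hδ.2)) (hVpos t ht.1 (ht.2.trans hδ.2)).le
      have h2 : 0 ≤ δ * V δ ^ 2 * ψ (1 / V δ ^ 2) :=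
        mul_nonneg (mul_nonneg hδ.1.le (sq_nonneg _)) hψδ.le
      have h3 : 0 ≤ 1 + ∫ t in Set.Ioc δ R, U t / (t * V t * ψ (1 / V t ^ 2)) := by
        refine add_nonneg zero_le_one (setIntegral_nonneg measurableSet_Ioc fun t ht => ?_)
        have ht0 : 0 < t := hδ.1.trans ht.1
        have hVt : 0 < V t := hVpos t ht0 ht.2
        have hψt : 0 < ψ (1 / V t ^ 2) := hψpos _ (one_div_pos.2 (pow_pos hVt 2))
        exact div_nonneg (hUnonneg t ht0 ht.2) (by positivity)
      exact add_nonneg h1 (mul_nonneg h2 h3)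
    · filter_upwards [hmem] with δ hδ
      have hVδ : 0 < V δ := hVpos δ hδ.1 hδ.2
      have hψδ : 0 < ψ (1 / V δ ^ 2) := hψpos _ (one_div_pos.2 (pow_pos hVδ 2))
      have hgR : V δ ^ 2 * ψ (1 / V δ ^ 2) ≤ V R ^ 2 * ψ (1 / V R ^ 2) :=
        hgmono (Set.mem_Ioi.2 hVδ) (Set.mem_Ioi.2 hVR) (hVmono δ R hδ.1 hδ.2 le_rfl)
      have hc' : δ * V δ ^ 2 * ψ (1 / V δ ^ 2) ≤ δ * (V R ^ 2 * ψ (1 / V R ^ 2)) := by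
        rw [mul_assoc]
        exact mul_le_mul_of_nonneg_left hgR hδ.1.le
      have hB : δ * V δ ^ 2 * ψ (1 / V δ ^ 2) *
          (∫ t in Set.Ioc δ R, U t / (t * V t * ψ (1 / V t ^ 2))) ≤
          ∫ t in Set.Ioc δ R, δ / t * (U t * V t) := by
        rw [← integral_const_mul]
        refine integral_mono_of_nonneg ?_ ?_ ?_
        · refine (ae_restrict_iff' measurableSet_Ioc).2 (ae_of_all _ fun t ht => ?_)
          have ht0 : 0 < t := hδ.1.trans ht.1
          have hVt : 0 < V t := hVpos t ht0 ht.2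
          have hψt : 0 < ψ (1 / V t ^ 2) := hψpos _ (one_div_pos.2 (pow_pos hVt 2))
          have hU := hUnonneg t ht0 ht.2
          exact mul_nonneg (mul_nonneg (mul_nonneg hδ.1.le (sq_nonneg _)) hψδ.le)
            (div_nonneg hU (mul_nonneg (mul_nonneg ht0.le hVt.le) hψt.le))
        · refine Integrable.mono' ((hUV.mono_set (Set.Ioc_subset_Ioc hδ.1.le le_rfl)).norm)
            (((measurable_const.div measurable_id).aestronglyMeasurable).mul
              (hUV.aestronglyMeasurable.mono_measure
                (Measure.restrict_mono (Set.Ioc_subset_Ioc hδ.1.le le_rfl) le_rfl))) ?_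
          rw [ae_restrict_iff' measurableSet_Ioc]
          refine ae_of_all _ fun t ht => ?_
          have ht0 : 0 < t := hδ.1.trans ht.1
          rw [norm_mul]
          have h1 : ‖δ / t‖ ≤ 1 := by
            rw [Real.norm_eq_abs, abs_of_nonneg (div_nonneg hδ.1.le ht0.le), div_le_one ht0]
            exact ht.1.le
          exact mul_le_of_le_one_left (norm_nonneg _) h1
        · refine (ae_restrict_iff' measurableSet_Ioc).2 (ae_of_all _ fun t ht => ?_)
          have ht0 : 0 < t := hδ.1.trans ht.1
          have hVt : 0 < V t := hVpos t ht0 ht.2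
          have hψt : 0 < ψ (1 / V t ^ 2) := hψpos _ (one_div_pos.2 (pow_pos hVt 2))
          have hU := hUnonneg t ht0 ht.2
          have hg : V δ ^ 2 * ψ (1 / V δ ^ 2) ≤ V t ^ 2 * ψ (1 / V t ^ 2) :=
            hgmono (Set.mem_Ioi.2 hVδ) (Set.mem_Ioi.2 hVt) (hVmono δ t hδ.1 ht.1.le ht.2)
          have hP : 0 < t * V t * ψ (1 / V t ^ 2) :=
            mul_pos (mul_pos ht0 hVt) hψt
          show δ * V δ ^ 2 * ψ (1 / V δ ^ 2) * (U t / (t * V t * ψ (1 / V t ^ 2))) ≤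
            δ / t * (U t * V t)
          rw [mul_div_assoc', div_mul_eq_mul_div, div_le_div_iff₀ hP ht0]
          nlinarith [mul_le_mul_of_nonneg_left hg
            (mul_nonneg (mul_nonneg hδ.1.le ht0.le) hU)]
      rw [mul_add, mul_one]
      exact add_le_add le_rfl (add_le_add hc' hB)
  refine ⟨first, Tendsto.congr' ?_ first⟩
  filter_upwards [hmem] with δ hδ
  have hVδ : 0 < V δ := hVpos δ hδ.1 hδ.2
  have hψδ : 0 < ψ (1 / V δ ^ 2) := hψpos _ (one_div_pos.2 (pow_pos hVδ 2))
  have hc : δ * V δ * ψ (1 / V δ ^ 2) ≠ 0 :=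
    ne_of_gt (mul_pos (mul_pos hδ.1 hVδ) hψδ)
  have h2 : δ * V δ * ψ (1 / V δ ^ 2) *
      ((δ * V δ * ψ (1 / V δ ^ 2))⁻¹ * (∫ t in Set.Ioc (0 : ℝ) δ, U t * V t)) =
      ∫ t in Set.Ioc (0 : ℝ) δ, U t * V t := by
    rw [← mul_assoc, mul_inv_cancel₀ hc, one_mul]
  rw [mul_add (δ * V δ * ψ (1 / V δ ^ 2)), h2]
  ring
end

section
/- Let ψ : [1,∞) → (0,∞) be continuous and satisfy the lower weak scaling condition at infinity with constant a̲ > 0 and exponent δ̲_ψ ∈ (0,1), such that r ↦ r² ψ(r^{-2}) is nondecreasing on (0,1], and let V : (0,1] → (0,1] be nondecreasing and satisfy the lower weak scaling condition at zero with constant ã₁ > 0 and exponent δ̲_V > 0. Define ρ(t) := V(t)² ψ(V(t)^{-2}) + V(t) ∫_{V(t)}^1 ψ(s^{-2}) ds and, for δ ∈ (0,1], H(δ) := ( δ V(δ) ψ(V(δ)^{-2}) )^{-1} ∫_0^δ ρ(t) V(t) dt + V(δ) ( 1 + ∫_δ^1 ρ(t) / ( t V(t) ψ(V(t)^{-2})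 ) dt ). Then there exists C ≥ 1 such that C⁻¹ V(δ) ≤ H(δ) ≤ C V(δ) for all δ ∈ (0,1]. -/
open Real MeasureTheory

/-- The weight `ρ(t) = V(t)² ψ(V(t)⁻²) + V(t) ∫_{V(t)}^1 ψ(s⁻²) ds` describing the boundary
decay of `ψ(-L_{|D}) ξ` for test functions `ξ`. -/
noncomputable def rhoWeight (ψ V : ℝ → ℝ) (t : ℝ) : ℝ :=
  V t ^ 2 * ψ (1 / V t ^ 2) + V t * ∫ s in Set.Ioc (V t) 1, ψ (1 / s ^ 2)

/-- The sharp two-sided bound `H(δ)` for the Green potential `G^ψ_D(ρ(δ_D))` at a point with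
`δ_D(x) = δ`. -/
noncomputable def greenBound (ψ V : ℝ → ℝ) (δ : ℝ) : ℝ :=
  (δ * V δ * ψ (1 / V δ ^ 2))⁻¹ * (∫ t in Set.Ioc (0 : ℝ) δ, rhoWeight ψ V t * V t) +
    V δ * (1 + ∫ t in Set.Ioc δ 1, rhoWeight ψ V t / (t * V t * ψ (1 / V t ^ 2)))

/-!
The scaling of `ψ` at infinity gives `ψ(s⁻²) ≤ a⁻¹ (W/s)^δψ ψ(W⁻²)` for `W ≤ s ≤ 1`, and
`s ↦ s^(-δψ)` is integrable at `0` because `δψ < 1`; hence `∫_W^1 ψ(s⁻²) ds ≲ W^δψ ψ(W⁻²)` and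
`ρ(t) ≲ V(t)^δψ · V(t) ψ(V(t)⁻²)`. In the first term of `H(δ)` the factor `V(t)^δψ ≤ 1` is dropped
and `V(t)² ψ(V(t)⁻²) ≤ V(δ)² ψ(V(δ)⁻²)` by monotonicity, which gives `≲ V(δ)`. In the second term
the integrand is `≲ V(t)^δψ / t ≲ t^(δV δψ - 1)` by the scaling of `V` at zero, whose integral over
`(0,1]` is finite. The lower bound `V(δ) ≤ H(δ)` holds because every term of `H` is nonnegative.
-/

def LowerScalingAtTop (ψ : ℝ → ℝ) (a δ : ℝ) : Prop :=
  ∀ lam t : ℝ, 1 ≤ lam → 1 ≤ t → a * lam ^ δ * ψ t ≤ ψ (lam * t)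

def LowerScalingAtZero (V : ℝ → ℝ) (a δ : ℝ) : Prop :=
  ∀ s t : ℝ, 0 < s → s ≤ t → t ≤ 1 → a * (t / s) ^ δ ≤ V t / V s

lemma one_le_one_div_sq {W : ℝ} (hW0 : 0 < W) (hW1 : W ≤ 1) : 1 ≤ 1 / W ^ 2 :=
  one_le_one_div (by positivity) (pow_le_one₀ hW0.le hW1)

lemma setIntegral_Ioc_le_of_le_mul_rpow {f : ℝ → ℝ} {x y c r : ℝ} (hx : 0 ≤ x) (hxy : x ≤ y)
    (hc : 0 ≤ c) (hr : -1 < r) (hf0 : ∀ s ∈ Set.Ioc x y, 0 ≤ f s)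
    (hf : ∀ s ∈ Set.Ioc x y, f s ≤ c * s ^ r) :
    ∫ s in Set.Ioc x y, f s ≤ c * y ^ (r + 1) / (r + 1) := by
  have hint : IntegrableOn (fun s => c * s ^ r) (Set.Ioc x y) :=
    ((intervalIntegral.intervalIntegrable_rpow' hr).1).const_mul c
  have hmono : ∫ s in Set.Ioc x y, f s ≤ ∫ s in Set.Ioc x y, c * s ^ r :=
    integral_mono_of_nonneg (ae_restrict_of_forall_mem measurableSet_Ioc hf0) hint
      (ae_restrict_of_forall_mem measurableSet_Ioc hf)
  have hcalc : ∫ s in Set.Ioc x y, c * s ^ r = c * ((y ^ (r + 1) - x ^ (r + 1)) / (r + 1)) := by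
    rw [integral_const_mul, ← intervalIntegral.integral_of_le hxy, integral_rpow (Or.inl hr)]
  have hx' : 0 ≤ x ^ (r + 1) := rpow_nonneg hx _
  have hr' : 0 < r + 1 := by linarith
  calc ∫ s in Set.Ioc x y, f s ≤ c * ((y ^ (r + 1) - x ^ (r + 1)) / (r + 1)) := hcalc ▸ hmono
    _ ≤ c * y ^ (r + 1) / (r + 1) := by
      rw [mul_div_assoc]
      gcongr
      linarith

section ScalingAtTop

variable {ψ : ℝ → ℝ} {a δ : ℝ}

lemma LowerScalingAtTop.psi_one_div_sq_le (hψ : LowerScalingAtTop ψ a δ) (ha : 0 < a)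
    (hδ : 0 < δ) (hψpos : ∀ t, 1 ≤ t → 0 < ψ t) {W s : ℝ} (hW0 : 0 < W) (hWs : W ≤ s)
    (hs1 : s ≤ 1) : ψ (1 / s ^ 2) ≤ a⁻¹ * W ^ δ * ψ (1 / W ^ 2) * s ^ (-δ) := by
  have hs0 : 0 < s := hW0.trans_le hWs
  have hlam : 1 ≤ s / W := (one_le_div hW0).2 hWs
  have hscale : a * ((s / W) ^ 2) ^ δ * ψ (1 / s ^ 2) ≤ ψ (1 / W ^ 2) := by
    have h := hψ ((s / W) ^ 2) (1 / s ^ 2) (one_le_pow₀ hlam) (one_le_one_div_sq hs0 hs1)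
    rwa [show (s / W) ^ 2 * (1 / s ^ 2) = 1 / W ^ 2 by field_simp] at h
  have hweaken : (s / W) ^ δ ≤ ((s / W) ^ 2) ^ δ :=
    rpow_le_rpow (by positivity) (le_self_pow₀ hlam two_ne_zero) hδ.le
  have hψs : 0 < ψ (1 / s ^ 2) := hψpos _ (one_le_one_div_sq hs0 hs1)
  have hmain : a * (s / W) ^ δ * ψ (1 / s ^ 2) ≤ ψ (1 / W ^ 2) :=
    le_trans (by gcongr) hscale
  rw [div_rpow hs0.le hW0.le, ← le_div_iff₀' (by positivity)] at hmain
  calc ψ (1 / s ^ 2) ≤ ψ (1 / W ^ 2) / (a * (s ^ δ / W ^ δ)) := hmain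
    _ = a⁻¹ * W ^ δ * ψ (1 / W ^ 2) * s ^ (-δ) := by
      have : s ^ δ ≠ 0 := by positivity
      have : W ^ δ ≠ 0 := by positivity
      rw [rpow_neg hs0.le]
      field_simp

lemma LowerScalingAtTop.integral_psi_one_div_sq_le (hψ : LowerScalingAtTop ψ a δ) (ha : 0 < a)
    (hδ : 0 < δ) (hδ1 : δ < 1) (hψpos : ∀ t, 1 ≤ t → 0 < ψ t) {W : ℝ} (hW0 : 0 < W)
    (hW1 : W ≤ 1) :
    ∫ s in Set.Ioc W 1, ψ (1 / s ^ 2) ≤ a⁻¹ * (1 - δ)⁻¹ * W ^ δ * ψ (1 / W ^ 2) := by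
  have hψW : 0 < ψ (1 / W ^ 2) := hψpos _ (one_le_one_div_sq hW0 hW1)
  have h := setIntegral_Ioc_le_of_le_mul_rpow hW0.le hW1 (by positivity) (by linarith)
    (fun s hs => (hψpos _ (one_le_one_div_sq (hW0.trans hs.1) hs.2)).le)
    (fun s hs => hψ.psi_one_div_sq_le ha hδ hψpos hW0 hs.1.le hs.2)
  rw [one_rpow, neg_add_eq_sub] at h
  exact h.trans_eq (by ring)

lemma LowerScalingAtTop.rhoWeight_le (hψ : LowerScalingAtTop ψ a δ) (ha : 0 < a)
    (hδ : 0 < δ) (hδ1 : δ < 1) (hψpos : ∀ t, 1 ≤ t → 0 < ψ t) {V : ℝ → ℝ} {t : ℝ}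
    (hV0 : 0 < V t) (hV1 : V t ≤ 1) :
    rhoWeight ψ V t ≤ (1 + a⁻¹ * (1 - δ)⁻¹) * V t ^ δ * (V t * ψ (1 / V t ^ 2)) := by
  have hψV : 0 < ψ (1 / V t ^ 2) := hψpos _ (one_le_one_div_sq hV0 hV1)
  have hsq : V t ^ 2 ≤ V t ^ δ * V t := by
    calc V t ^ 2 = V t ^ (1 : ℝ) * V t := by rw [rpow_one, sq]
      _ ≤ V t ^ δ * V t :=
        mul_le_mul_of_nonneg_right (rpow_le_rpow_of_exponent_ge hV0 hV1 hδ1.le) hV0.le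
  have hint := hψ.integral_psi_one_div_sq_le ha hδ hδ1 hψpos hV0 hV1
  calc rhoWeight ψ V t
      ≤ V t ^ δ * V t * ψ (1 / V t ^ 2) +
          V t * (a⁻¹ * (1 - δ)⁻¹ * V t ^ δ * ψ (1 / V t ^ 2)) := by
        unfold rhoWeight; gcongr
    _ = _ := by ring

end ScalingAtTop

lemma rhoWeight_nonneg {ψ V : ℝ → ℝ} (hψpos : ∀ t, 1 ≤ t → 0 < ψ t) {t : ℝ} (hV0 : 0 < V t)
    (hV1 : V t ≤ 1) : 0 ≤ rhoWeight ψ V t := by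
  have hψV : 0 < ψ (1 / V t ^ 2) := hψpos _ (one_le_one_div_sq hV0 hV1)
  have hint : 0 ≤ ∫ s in Set.Ioc (V t) 1, ψ (1 / s ^ 2) :=
    setIntegral_nonneg measurableSet_Ioc fun s hs =>
      (hψpos _ (one_le_one_div_sq (hV0.trans hs.1) hs.2)).le
  unfold rhoWeight
  positivity

lemma rhoWeight_div_nonneg {ψ V : ℝ → ℝ} (hψpos : ∀ t, 1 ≤ t → 0 < ψ t) {t : ℝ} (ht0 : 0 < t)
    (hV0 : 0 < V t) (hV1 : V t ≤ 1) : 0 ≤ rhoWeight ψ V t / (t * V t * ψ (1 / V t ^ 2)) := by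
  have hψV : 0 < ψ (1 / V t ^ 2) := hψpos _ (one_le_one_div_sq hV0 hV1)
  exact div_nonneg (rhoWeight_nonneg hψpos hV0 hV1) (by positivity)

lemma LowerScalingAtZero.le_mul_rpow {V : ℝ → ℝ} {a δ : ℝ} (hV : LowerScalingAtZero V a δ)
    (ha : 0 < a) (hV1 : V 1 ≤ 1) {t : ℝ} (ht0 : 0 < t) (ht1 : t ≤ 1) (hVt : 0 < V t) :
    V t ≤ a⁻¹ * t ^ δ := by
  have h := hV t 1 ht0 ht1 le_rfl
  rw [le_div_iff₀ hVt, one_div, inv_rpow ht0.le] at h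
  have : 0 < t ^ δ := by positivity
  calc V t = a⁻¹ * t ^ δ * (a * (t ^ δ)⁻¹ * V t) := by field_simp
    _ ≤ a⁻¹ * t ^ δ * 1 := by gcongr; exact h.trans hV1
    _ = a⁻¹ * t ^ δ := mul_one _

section GreenBound

variable {ψ V : ℝ → ℝ} {K δψ δ : ℝ}

lemma integral_rhoWeight_mul_le (hK : 0 ≤ K) (hδψ : 0 < δψ) (hψpos : ∀ t, 1 ≤ t → 0 < ψ t)
    (hgmono : MonotoneOn (fun r : ℝ => r ^ 2 * ψ (1 / r ^ 2)) (Set.Ioc 0 1))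
    (hVrange : ∀ t : ℝ, 0 < t → t ≤ 1 → 0 < V t ∧ V t ≤ 1)
    (hVmono : ∀ s t : ℝ, 0 < s → s ≤ t → t ≤ 1 → V s ≤ V t)
    (hρ : ∀ t : ℝ, 0 < t → t ≤ 1 → rhoWeight ψ V t ≤ K * V t ^ δψ * (V t * ψ (1 / V t ^ 2)))
    (hδ0 : 0 < δ) (hδ1 : δ ≤ 1) :
    ∫ t in Set.Ioc 0 δ, rhoWeight ψ V t * V t ≤ K * (V δ ^ 2 * ψ (1 / V δ ^ 2)) * δ := by
  obtain ⟨hVδ0, hVδ1⟩ := hVrange δ hδ0 hδ1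
  have hψδ : 0 < ψ (1 / V δ ^ 2) := hψpos _ (one_le_one_div_sq hVδ0 hVδ1)
  have hnonneg : ∀ t ∈ Set.Ioc 0 δ, 0 ≤ rhoWeight ψ V t * V t := by
    rintro t ⟨ht0, htδ⟩
    obtain ⟨hV0, hV1⟩ := hVrange t ht0 (htδ.trans hδ1)
    exact mul_nonneg (rhoWeight_nonneg hψpos hV0 hV1) hV0.le
  have hle : ∀ t ∈ Set.Ioc 0 δ,
      rhoWeight ψ V t * V t ≤ K * (V δ ^ 2 * ψ (1 / V δ ^ 2)) * t ^ (0 : ℝ) := by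
    rintro t ⟨ht0, htδ⟩
    obtain ⟨hV0, hV1⟩ := hVrange t ht0 (htδ.trans hδ1)
    have hψV : 0 < ψ (1 / V t ^ 2) := hψpos _ (one_le_one_div_sq hV0 hV1)
    have hg : V t ^ 2 * ψ (1 / V t ^ 2) ≤ V δ ^ 2 * ψ (1 / V δ ^ 2) :=
      hgmono ⟨hV0, hV1⟩ ⟨hVδ0, hVδ1⟩ (hVmono t δ ht0 htδ hδ1)
    calc rhoWeight ψ V t * V t ≤ K * V t ^ δψ * (V t * ψ (1 / V t ^ 2)) * V t := by
          gcongr; exact hρ t ht0 (htδ.trans hδ1)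
      _ = K * V t ^ δψ * (V t ^ 2 * ψ (1 / V t ^ 2)) := by ring
      _ ≤ K * 1 * (V δ ^ 2 * ψ (1 / V δ ^ 2)) := by
          gcongr; exact rpow_le_one hV0.le hV1 hδψ.le
      _ = _ := by rw [rpow_zero]; ring
  simpa using setIntegral_Ioc_le_of_le_mul_rpow le_rfl hδ0.le (by positivity) (by norm_num)
    hnonneg hle

lemma integral_rhoWeight_div_le {a₁ δV : ℝ} (hK : 0 ≤ K) (hδψ : 0 < δψ) (ha₁ : 0 < a₁)
    (hδV : 0 < δV) (hψpos : ∀ t, 1 ≤ t → 0 < ψ t)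
    (hVrange : ∀ t : ℝ, 0 < t → t ≤ 1 → 0 < V t ∧ V t ≤ 1)
    (hVscale : LowerScalingAtZero V a₁ δV)
    (hρ : ∀ t : ℝ, 0 < t → t ≤ 1 → rhoWeight ψ V t ≤ K * V t ^ δψ * (V t * ψ (1 / V t ^ 2)))
    (hδ0 : 0 < δ) (hδ1 : δ ≤ 1) :
    ∫ t in Set.Ioc δ 1, rhoWeight ψ V t / (t * V t * ψ (1 / V t ^ 2)) ≤
      K * (a₁ ^ δψ)⁻¹ / (δV * δψ) := by
  have hnonneg : ∀ t ∈ Set.Ioc δ 1, 0 ≤ rhoWeight ψ V t / (t * V t * ψ (1 / V t ^ 2)) := by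
    rintro t ⟨hδt, ht1⟩
    have ht0 : 0 < t := hδ0.trans hδt
    obtain ⟨hV0, hV1⟩ := hVrange t ht0 ht1
    exact rhoWeight_div_nonneg hψpos ht0 hV0 hV1
  have hle : ∀ t ∈ Set.Ioc δ 1, rhoWeight ψ V t / (t * V t * ψ (1 / V t ^ 2)) ≤
      K * (a₁ ^ δψ)⁻¹ * t ^ (δV * δψ - 1) := by
    rintro t ⟨hδt, ht1⟩
    have ht0 : 0 < t := hδ0.trans hδt
    obtain ⟨hV0, hV1⟩ := hVrange t ht0 ht1
    have hψV : 0 < ψ (1 / V t ^ 2) := hψpos _ (one_le_one_div_sq hV0 hV1)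
    have hVt : V t ^ δψ ≤ (a₁ ^ δψ)⁻¹ * t ^ (δV * δψ) := by
      calc V t ^ δψ ≤ (a₁⁻¹ * t ^ δV) ^ δψ := by
            gcongr; exact hVscale.le_mul_rpow ha₁ (hVrange 1 one_pos le_rfl).2 ht0 ht1 hV0
        _ = (a₁ ^ δψ)⁻¹ * t ^ (δV * δψ) := by
            rw [mul_rpow (by positivity) (by positivity), inv_rpow ha₁.le, ← rpow_mul ht0.le]
    calc rhoWeight ψ V t / (t * V t * ψ (1 / V t ^ 2))
        ≤ K * V t ^ δψ * (V t * ψ (1 / V t ^ 2)) / (t * V t * ψ (1 / V t ^ 2)) := by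
          gcongr; exact hρ t ht0 ht1
      _ = K * V t ^ δψ / t := by field_simp
      _ ≤ K * ((a₁ ^ δψ)⁻¹ * t ^ (δV * δψ)) / t := by gcongr
      _ = K * (a₁ ^ δψ)⁻¹ * t ^ (δV * δψ - 1) := by rw [rpow_sub_one ht0.ne']; ring
  simpa using setIntegral_Ioc_le_of_le_mul_rpow hδ0.le hδ1 (by positivity)
    (by linarith [mul_pos hδV hδψ]) hnonneg hle

lemma le_greenBound (hψpos : ∀ t, 1 ≤ t → 0 < ψ t)
    (hVrange : ∀ t : ℝ, 0 < t → t ≤ 1 → 0 < V t ∧ V t ≤ 1) (hδ0 : 0 < δ) (hδ1 : δ ≤ 1) :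
    V δ ≤ greenBound ψ V δ := by
  obtain ⟨hVδ0, hVδ1⟩ := hVrange δ hδ0 hδ1
  have hψδ : 0 < ψ (1 / V δ ^ 2) := hψpos _ (one_le_one_div_sq hVδ0 hVδ1)
  have hA : 0 ≤ ∫ t in Set.Ioc 0 δ, rhoWeight ψ V t * V t :=
    setIntegral_nonneg measurableSet_Ioc fun t ht =>
      have hV := hVrange t ht.1 (ht.2.trans hδ1)
      mul_nonneg (rhoWeight_nonneg hψpos hV.1 hV.2) hV.1.le
  have hB : 0 ≤ ∫ t in Set.Ioc δ 1, rhoWeight ψ V t / (t * V t * ψ (1 / V t ^ 2)) :=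
    setIntegral_nonneg measurableSet_Ioc fun t ht =>
      have hV := hVrange t (hδ0.trans ht.1) ht.2
      rhoWeight_div_nonneg hψpos (hδ0.trans ht.1) hV.1 hV.2
  exact le_add_of_nonneg_of_le (mul_nonneg (inv_nonneg.2 (by positivity)) hA)
    (le_mul_of_one_le_right hVδ0.le (le_add_of_nonneg_right hB))

lemma greenBound_le {a₁ δV : ℝ} (hK : 0 ≤ K) (hδψ : 0 < δψ) (ha₁ : 0 < a₁) (hδV : 0 < δV)
    (hψpos : ∀ t, 1 ≤ t → 0 < ψ t)
    (hgmono : MonotoneOn (fun r : ℝ => r ^ 2 * ψ (1 / r ^ 2)) (Set.Ioc 0 1))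
    (hVrange : ∀ t : ℝ, 0 < t → t ≤ 1 → 0 < V t ∧ V t ≤ 1)
    (hVmono : ∀ s t : ℝ, 0 < s → s ≤ t → t ≤ 1 → V s ≤ V t)
    (hVscale : LowerScalingAtZero V a₁ δV)
    (hρ : ∀ t : ℝ, 0 < t → t ≤ 1 → rhoWeight ψ V t ≤ K * V t ^ δψ * (V t * ψ (1 / V t ^ 2)))
    (hδ0 : 0 < δ) (hδ1 : δ ≤ 1) :
    greenBound ψ V δ ≤ (K + 1 + K * (a₁ ^ δψ)⁻¹ / (δV * δψ)) * V δ := by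
  obtain ⟨hVδ0, hVδ1⟩ := hVrange δ hδ0 hδ1
  have hψδ : 0 < ψ (1 / V δ ^ 2) := hψpos _ (one_le_one_div_sq hVδ0 hVδ1)
  have hA := integral_rhoWeight_mul_le hK hδψ hψpos hgmono hVrange hVmono hρ hδ0 hδ1
  have hB := integral_rhoWeight_div_le hK hδψ ha₁ hδV hψpos hVrange hVscale hρ hδ0 hδ1
  calc greenBound ψ V δ
      ≤ (δ * V δ * ψ (1 / V δ ^ 2))⁻¹ * (K * (V δ ^ 2 * ψ (1 / V δ ^ 2)) * δ) +
          V δ * (1 + K * (a₁ ^ δψ)⁻¹ / (δV * δψ)) := by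
        unfold greenBound; gcongr
    _ = _ := by field_simp; ring

end GreenBound

theorem stmt_11_general (ψ V : ℝ → ℝ) (a δψ a₁ δV : ℝ)
    (ha : 0 < a) (hδψ : 0 < δψ) (hδψ1 : δψ < 1) (ha₁ : 0 < a₁) (hδV : 0 < δV)
    (hψpos : ∀ t : ℝ, 1 ≤ t → 0 < ψ t)
    (hψscale : ∀ lam t : ℝ, 1 ≤ lam → 1 ≤ t → a * lam ^ δψ * ψ t ≤ ψ (lam * t))
    (hgmono : MonotoneOn (fun r : ℝ => r ^ 2 * ψ (1 / r ^ 2)) (Set.Ioc 0 1))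
    (hVrange : ∀ t : ℝ, 0 < t → t ≤ 1 → 0 < V t ∧ V t ≤ 1)
    (hVmono : ∀ s t : ℝ, 0 < s → s ≤ t → t ≤ 1 → V s ≤ V t)
    (hVscale : ∀ s t : ℝ, 0 < s → s ≤ t → t ≤ 1 → a₁ * (t / s) ^ δV ≤ V t / V s) :
    ∃ C : ℝ, 1 ≤ C ∧ ∀ δ : ℝ, 0 < δ → δ ≤ 1 →
      C⁻¹ * V δ ≤ greenBound ψ V δ ∧ greenBound ψ V δ ≤ C * V δ := by
  set K := 1 + a⁻¹ * (1 - δψ)⁻¹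
  have h1δψ : 0 < 1 - δψ := by linarith
  have hK : 0 ≤ K := by positivity
  have hρ (t : ℝ) (ht0 : 0 < t) (ht1 : t ≤ 1) :
      rhoWeight ψ V t ≤ K * V t ^ δψ * (V t * ψ (1 / V t ^ 2)) :=
    LowerScalingAtTop.rhoWeight_le hψscale ha hδψ hδψ1 hψpos (hVrange t ht0 ht1).1
      (hVrange t ht0 ht1).2
  set C := K + 1 + K * (a₁ ^ δψ)⁻¹ / (δV * δψ)
  have hC : 1 ≤ C := by
    have : 0 ≤ K * (a₁ ^ δψ)⁻¹ / (δV * δψ) := by positivity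
    linarith
  refine ⟨C, hC, fun δ hδ0 hδ1 => ⟨?_, ?_⟩⟩
  · calc C⁻¹ * V δ ≤ V δ :=
          mul_le_of_le_one_left (hVrange δ hδ0 hδ1).1.le (inv_le_one_of_one_le₀ hC)
      _ ≤ greenBound ψ V δ := le_greenBound hψpos hVrange hδ0 hδ1
  · exact greenBound_le hK hδψ ha₁ hδV hψpos hgmono hVrange hVmono hVscale hρ hδ0 hδ1

/-- One-dimensional core of the estimate `G^ψ_D(ρ(δ_D)) ≍ V(δ_D)`: the bound `H(δ)` is
comparable to `V(δ)` on `(0,1]`. -/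
theorem stmt_11 (ψ V : ℝ → ℝ) (a δψ a₁ δV : ℝ)
    (ha : 0 < a) (hδψ : 0 < δψ) (hδψ1 : δψ < 1) (ha₁ : 0 < a₁) (hδV : 0 < δV)
    (hψcont : ContinuousOn ψ (Set.Ici 1)) (hψpos : ∀ t : ℝ, 1 ≤ t → 0 < ψ t)
    (hψscale : ∀ lam t : ℝ, 1 ≤ lam → 1 ≤ t → a * lam ^ δψ * ψ t ≤ ψ (lam * t))
    (hgmono : MonotoneOn (fun r : ℝ => r ^ 2 * ψ (1 / r ^ 2)) (Set.Ioc 0 1))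
    (hVrange : ∀ t : ℝ, 0 < t → t ≤ 1 → 0 < V t ∧ V t ≤ 1)
    (hVmono : ∀ s t : ℝ, 0 < s → s ≤ t → t ≤ 1 → V s ≤ V t)
    (hVscale : ∀ s t : ℝ, 0 < s → s ≤ t → t ≤ 1 → a₁ * (t / s) ^ δV ≤ V t / V s) :
    ∃ C : ℝ, 1 ≤ C ∧ ∀ δ : ℝ, 0 < δ → δ ≤ 1 →
      C⁻¹ * V δ ≤ greenBound ψ V δ ∧ greenBound ψ V δ ≤ C * V δ :=
  stmt_11_general ψ V a δψ a₁ δV ha hδψ hδψ1 ha₁ hδV hψpos hψscale hgmono hVrange hVmono hVscale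
end

section
/- Let d ≥ 1 and let D ⊂ ℝ^d be a nonempty bounded open set with diam D ≤ 1. Let ψ : [1,∞) → (0,∞) be continuous and satisfy the lower weak scaling condition at infinity with constant a̲ > 0 and exponent δ̲_ψ ∈ (0,1), such that r ↦ r² ψ(r^{-2}) is nondecreasing on (0,1], and let V : (0,1] → (0,1] be nondecreasing and satisfy the lower weak scaling condition at zero with constant ã₁ > 0 and exponent δ̲_V > 0. Define ρ(t) := V(t)² ψ(V(t)^{-2}) + V(t) ∫_{V(t)}^1 ψ(s^{-2}) ds and F(x,z) := V(δ_D(x)) / ( V(|x−z|)² |x−z|^d ψ(V(|x−z|)^{-2}) ). Then there exists C > 0 such that for every z ∈ ∂D: ∫_D F(x,z) ρ(δ_D(x)) dx ≤ C, where the integral is with respect to Lebesgue measure on D. -/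
open Real MeasureTheory Metric
open scoped ENNReal

lemma aux13_finite (d : ℕ) (hd : 1 ≤ d) {p : ℝ} (hp1 : -(d:ℝ) < p) (hp2 : p < 0) :
    ∫⁻ x : EuclideanSpace ℝ (Fin d),
      ENNReal.ofReal ((Metric.closedBall (0 : EuclideanSpace ℝ (Fin d)) 1).indicator
        (fun y => ‖y‖ ^ p) x) < ⊤ := by
  set E := EuclideanSpace ℝ (Fin d)
  set f : E → ℝ := (Metric.closedBall (0:E) 1).indicator (fun y => ‖y‖ ^ p) with hf
  have hnn : ∀ x, 0 ≤ f x :=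
    fun x => Set.indicator_nonneg (fun y _ => Real.rpow_nonneg (norm_nonneg y) p) x
  have hmeas : Measurable f :=
    (by fun_prop : Measurable fun y : E => ‖y‖ ^ p).indicator measurableSet_closedBall
  rw [lintegral_eq_lintegral_meas_le volume (Filter.Eventually.of_forall hnn) hmeas.aemeasurable]
  have hfr : Module.finrank ℝ E = d := finrank_euclideanSpace_fin
  set mB := volume (Metric.ball (0:E) 1) with hmBdef
  have hmB : mB < ⊤ := measure_ball_lt_top
  have hsub : ∀ t : ℝ, 0 < t →
      {x : E | t ≤ f x} ⊆ Metric.closedBall 0 1 ∩ Metric.closedBall 0 (t ^ p⁻¹) := by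
    intro t ht x hx
    simp only [Set.mem_setOf_eq] at hx
    by_cases hxb : x ∈ Metric.closedBall (0:E) 1
    · have hfx : f x = ‖x‖ ^ p := Set.indicator_of_mem hxb _
      rw [hfx] at hx
      have hx0 : x ≠ 0 := by
        rintro rfl
        rw [norm_zero, Real.zero_rpow hp2.ne] at hx; linarith
      have hxpos : (0:ℝ) < ‖x‖ := norm_pos_iff.mpr hx0
      refine ⟨hxb, ?_⟩
      rw [Metric.mem_closedBall, dist_zero_right]
      have h2 := Real.rpow_le_rpow_of_nonpos ht hx (inv_nonpos.mpr hp2.le)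
      rwa [Real.rpow_rpow_inv hxpos.le hp2.ne] at h2
    · exfalso
      rw [hf, Set.indicator_of_notMem hxb] at hx; linarith
  have hq : (p⁻¹ * (d:ℝ)) < -1 := by
    rw [← div_eq_inv_mul, div_lt_iff_of_neg hp2]
    linarith
  calc ∫⁻ t in Set.Ioi (0:ℝ), volume {x : E | t ≤ f x}
      ≤ ∫⁻ t in Set.Ioc (0:ℝ) 1 ∪ Set.Ioi 1, volume {x : E | t ≤ f x} :=
        lintegral_mono_set Set.Ioi_subset_Ioc_union_Ioi
    _ ≤ (∫⁻ t in Set.Ioc (0:ℝ) 1, volume {x : E | t ≤ f x})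
          + ∫⁻ t in Set.Ioi (1:ℝ), volume {x : E | t ≤ f x} := lintegral_union_le _ _ _
    _ < ⊤ := by
        refine ENNReal.add_lt_top.2 ⟨?_, ?_⟩
        · calc (∫⁻ t in Set.Ioc (0:ℝ) 1, volume {x : E | t ≤ f x})
              ≤ ∫⁻ _ in Set.Ioc (0:ℝ) 1, volume (Metric.closedBall (0:E) 1) := by
                refine setLIntegral_mono' measurableSet_Ioc (fun t ht => ?_)
                exact measure_mono ((hsub t ht.1).trans Set.inter_subset_left)
            _ = volume (Metric.closedBall (0:E) 1) * volume (Set.Ioc (0:ℝ) 1) := by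
                rw [setLIntegral_const]
            _ < ⊤ := by
                refine ENNReal.mul_lt_top measure_closedBall_lt_top ?_
                rw [Real.volume_Ioc]; exact ENNReal.ofReal_lt_top
        · calc (∫⁻ t in Set.Ioi (1:ℝ), volume {x : E | t ≤ f x})
              ≤ ∫⁻ t in Set.Ioi (1:ℝ), ENNReal.ofReal (t ^ (p⁻¹ * (d:ℝ))) * mB := by
                refine setLIntegral_mono' measurableSet_Ioi (fun t ht => ?_)
                have htpos : (0:ℝ) < t := lt_trans one_pos ht
                calc volume {x : E | t ≤ f x}
                    ≤ volume (Metric.closedBall (0:E) (t ^ p⁻¹)) :=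
                      measure_mono ((hsub t htpos).trans Set.inter_subset_right)
                  _ = ENNReal.ofReal ((t ^ p⁻¹) ^ Module.finrank ℝ E) * mB :=
                      Measure.addHaar_closedBall _ _ (Real.rpow_nonneg htpos.le _)
                  _ = ENNReal.ofReal (t ^ (p⁻¹ * (d:ℝ))) * mB := by
                      rw [hfr, ← Real.rpow_natCast (t ^ p⁻¹) d,
                        ← Real.rpow_mul htpos.le]
            _ = (∫⁻ t in Set.Ioi (1:ℝ), ENNReal.ofReal (t ^ (p⁻¹ * (d:ℝ)))) * mB :=
                lintegral_mul_const' mB _ hmB.ne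
            _ < ⊤ := by
                refine ENNReal.mul_lt_top ?_ hmB
                exact (integrableOn_Ioi_rpow_of_lt hq one_pos).lintegral_lt_top

/-- The weight `ρ(t) = V(t)² ψ(V(t)⁻²) + V(t) ∫_{V(t)}^1 ψ(s⁻²) ds` describing the boundary
decay of `ψ(-L_{|D}) ξ` for test functions `ξ`. -/
noncomputable def rhoWeight13 (ψ V : ℝ → ℝ) (t : ℝ) : ℝ :=
  V t ^ 2 * ψ (1 / V t ^ 2) + V t * ∫ s in Set.Ioc (V t) 1, ψ (1 / s ^ 2)

set_option maxHeartbeats 2000000 in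
/-- The Poisson kernel profile `F(x,z) * ρ(δ_D(x))` is integrable over `D`, uniformly in
`z ∈ ∂D`: the core of the bound of Poisson potentials in `L¹(D, ρ(δ_D(x)) dx)`. -/
theorem stmt_13 (d : ℕ) (hd : 1 ≤ d)
    (D : Set (EuclideanSpace ℝ (Fin d))) (hD : IsOpen D) (hDne : D.Nonempty)
    (hDb : Bornology.IsBounded D) (hdiam : Metric.diam D ≤ 1)
    (ψ V : ℝ → ℝ) (a δψ a₁ δV : ℝ)
    (ha : 0 < a) (hδψ : 0 < δψ) (hδψ1 : δψ < 1) (ha₁ : 0 < a₁) (hδV : 0 < δV)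
    (hψcont : ContinuousOn ψ (Set.Ici 1)) (hψpos : ∀ t : ℝ, 1 ≤ t → 0 < ψ t)
    (hψscale : ∀ lam t : ℝ, 1 ≤ lam → 1 ≤ t → a * lam ^ δψ * ψ t ≤ ψ (lam * t))
    (hgmono : MonotoneOn (fun r : ℝ => r ^ 2 * ψ (1 / r ^ 2)) (Set.Ioc 0 1))
    (hVrange : ∀ t : ℝ, 0 < t → t ≤ 1 → 0 < V t ∧ V t ≤ 1)
    (hVmono : ∀ s t : ℝ, 0 < s → s ≤ t → t ≤ 1 → V s ≤ V t)
    (hVscale : ∀ s t : ℝ, 0 < s → s ≤ t → t ≤ 1 → a₁ * (t / s) ^ δV ≤ V t / V s) :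
    ∃ C : ℝ, 0 < C ∧ ∀ z ∈ frontier D,
      (∫⁻ x in D, ENNReal.ofReal
          ((V (infDist x Dᶜ) /
              (V (dist x z) ^ 2 * dist x z ^ d * ψ (1 / V (dist x z) ^ 2))) *
            rhoWeight13 ψ V (infDist x Dᶜ))) ≤ ENNReal.ofReal C := by
  classical
  set e : ℝ := min (δψ * δV) 2⁻¹ with he_def
  have he0 : 0 < e := lt_min (by positivity) (by norm_num)
  have heψV : e ≤ δψ * δV := min_le_left _ _
  have heV : e ≤ δV := heψV.trans (by
    have h := mul_le_mul_of_nonneg_right hδψ1.le hδV.le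
    linarith)
  have hd1 : (1:ℝ) ≤ (d:ℝ) := by exact_mod_cast hd
  have hed : e - (d:ℝ) < 0 := by
    have h2 : e ≤ 2⁻¹ := min_le_right _ _
    linarith
  have hedlow : -(d:ℝ) < e - (d:ℝ) := by linarith
  have h1δψ : (0:ℝ) < 1 - δψ := by linarith
  set K : ℝ := a₁⁻¹ + a⁻¹ * (1 - δψ)⁻¹ * a₁ ^ (-δψ) with hK_def
  have hK : 0 < K := add_pos (inv_pos.mpr ha₁)
    (mul_pos (mul_pos (inv_pos.mpr ha) (inv_pos.mpr h1δψ)) (Real.rpow_pos_of_pos ha₁ _))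
  set f0 : EuclideanSpace ℝ (Fin d) → ℝ := (Metric.closedBall (0:EuclideanSpace ℝ (Fin d)) 1).indicator (fun y => ‖y‖ ^ (e - (d:ℝ)))
    with hf0
  set I : ℝ≥0∞ := ∫⁻ x : EuclideanSpace ℝ (Fin d), ENNReal.ofReal (f0 x) with hI
  have hIfin : I < ⊤ := by
    rw [hI, hf0]; exact aux13_finite d hd hedlow hed
  have hKI : ENNReal.ofReal K * I ≠ ⊤ := ENNReal.mul_ne_top ENNReal.ofReal_ne_top hIfin.ne
  refine ⟨(ENNReal.ofReal K * I).toReal + 1, by positivity, ?_⟩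
  intro z hz
  have hzD : z ∉ D := fun h => ((hD.frontier_eq ▸ hz)).2 h
  have hzcl : z ∈ closure D := ((hD.frontier_eq ▸ hz)).1
  have hzDc : z ∈ Dᶜ := hzD
  have hpt : ∀ x ∈ D, ENNReal.ofReal
      ((V (infDist x Dᶜ) /
          (V (dist x z) ^ 2 * dist x z ^ d * ψ (1 / V (dist x z) ^ 2))) *
        rhoWeight13 ψ V (infDist x Dᶜ)) ≤ ENNReal.ofReal (K * f0 (x - z)) := by
    intro x hx
    have hxz : x ≠ z := fun h => hzD (h ▸ hx)
    set δx := infDist x Dᶜ with hδx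
    set r := dist x z with hrdef
    have hr0 : 0 < r := dist_pos.mpr hxz
    have hr1 : r ≤ 1 := by
      have h3 := Metric.dist_le_diam_of_mem hDb.closure (subset_closure hx) hzcl
      rw [Metric.diam_closure] at h3
      exact h3.trans hdiam
    have hδ0 : 0 < δx := by
      rw [hδx, ← (hD.isClosed_compl.notMem_iff_infDist_pos ⟨z, hzDc⟩)]
      simpa using hx
    have hδr : δx ≤ r := Metric.infDist_le_dist_of_mem hzDc
    have hδ1 : δx ≤ 1 := hδr.trans hr1
    obtain ⟨hv0, hv1⟩ := hVrange δx hδ0 hδ1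
    obtain ⟨hw0, hw1⟩ := hVrange r hr0 hr1
    set v := V δx with hvdef
    set w := V r with hwdef
    have hvw : v ≤ w := hVmono δx r hδ0 hδr hr1
    have h1v : (1:ℝ) ≤ 1 / v ^ 2 := by
      rw [le_div_iff₀ (by positivity), one_mul]; exact pow_le_one₀ hv0.le hv1
    have h1w : (1:ℝ) ≤ 1 / w ^ 2 := by
      rw [le_div_iff₀ (by positivity), one_mul]; exact pow_le_one₀ hw0.le hw1
    have hψv := hψpos _ h1v
    have hψw := hψpos _ h1w
    have hA : (0:ℝ) < w ^ 2 * ψ (1 / w ^ 2) := mul_pos (by positivity) hψw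
    have hgm : v ^ 2 * ψ (1 / v ^ 2) ≤ w ^ 2 * ψ (1 / w ^ 2) :=
      hgmono ⟨hv0, hv1⟩ ⟨hw0, hw1⟩ hvw
    -- w ≤ r ^ δV * a₁⁻¹
    have hwr : w ≤ r ^ δV * a₁⁻¹ := by
      have h1 := hVscale r 1 hr0 hr1 le_rfl
      have hV1 : V 1 ≤ 1 := (hVrange 1 one_pos le_rfl).2
      have hXpos : (0:ℝ) < a₁ * (1 / r) ^ δV :=
        mul_pos ha₁ (Real.rpow_pos_of_pos (by positivity) _)
      have h2 : a₁ * (1 / r) ^ δV * w ≤ V 1 := (le_div_iff₀ hw0).mp h1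
      have h3 : a₁ * (1 / r) ^ δV * w ≤ 1 := h2.trans hV1
      have h4 : w ≤ 1 / (a₁ * (1 / r) ^ δV) := by
        rw [le_div_iff₀ hXpos]; linarith [h3]
      have h5 : (1:ℝ) / (a₁ * (1 / r) ^ δV) = r ^ δV * a₁⁻¹ := by
        rw [one_div, mul_inv, one_div, Real.inv_rpow hr0.le, inv_inv, mul_comm]
      rwa [h5] at h4
    have hrVe : r ^ δV ≤ r ^ e := Real.rpow_le_rpow_of_exponent_ge hr0 hr1 heV
    have hwre : w ≤ r ^ e * a₁⁻¹ :=
      hwr.trans (mul_le_mul_of_nonneg_right hrVe (inv_nonneg.mpr ha₁.le))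
    -- bound on the integral J
    set J := ∫ s in Set.Ioc v 1, ψ (1 / s ^ 2) with hJdef
    set c : ℝ := a⁻¹ * ψ (1 / v ^ 2) * v ^ δψ with hcdef
    have hc0 : 0 ≤ c :=
      le_of_lt (mul_pos (mul_pos (inv_pos.mpr ha) hψv) (Real.rpow_pos_of_pos hv0 _))
    have hmaps : ∀ s ∈ Set.Icc v 1, (1:ℝ) ≤ 1 / s ^ 2 := by
      intro s hs
      have hs0 : 0 < s := lt_of_lt_of_le hv0 hs.1
      rw [le_div_iff₀ (by positivity), one_mul]; exact pow_le_one₀ hs0.le hs.2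
    have hcont : ContinuousOn (fun s : ℝ => ψ (1 / s ^ 2)) (Set.Icc v 1) := by
      refine hψcont.comp ?_ (fun s hs => hmaps s hs)
      exact continuousOn_const.div (continuousOn_id.pow 2)
        (fun s hs => by
          have hs0 : 0 < s := lt_of_lt_of_le hv0 hs.1
          positivity)
    have hint1 : IntegrableOn (fun s : ℝ => ψ (1 / s ^ 2)) (Set.Ioc v 1) :=
      (hcont.integrableOn_Icc).mono_set Set.Ioc_subset_Icc_self
    have hint2 : IntegrableOn (fun s : ℝ => c * s ^ (-δψ)) (Set.Ioc v 1) := by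
      refine Integrable.const_mul ?_ c
      refine (ContinuousOn.integrableOn_Icc ?_).mono_set Set.Ioc_subset_Icc_self
      exact ContinuousOn.rpow_const continuousOn_id
        (fun s hs => Or.inl (ne_of_gt (lt_of_lt_of_le hv0 hs.1)))
    have hpt2 : ∀ s ∈ Set.Ioc v 1, ψ (1 / s ^ 2) ≤ c * s ^ (-δψ) := by
      intro s hs
      have hs0 : 0 < s := lt_trans hv0 hs.1
      have hsv : (1:ℝ) ≤ s / v := (le_div_iff₀ hv0).mpr (by linarith [hs.1])
      have hlam : (1:ℝ) ≤ (s / v) ^ 2 := one_le_pow₀ hsv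
      have hts : (1:ℝ) ≤ 1 / s ^ 2 := hmaps s ⟨hs.1.le, hs.2⟩
      have hkey := hψscale ((s / v) ^ 2) (1 / s ^ 2) hlam hts
      have heq : (s / v) ^ 2 * (1 / s ^ 2) = 1 / v ^ 2 := by
        field_simp; try ring
      rw [heq] at hkey
      have hexp : (s / v) ^ δψ ≤ ((s / v) ^ 2 : ℝ) ^ δψ := by
        rw [← Real.rpow_natCast (s / v) 2, ← Real.rpow_mul (by positivity)]
        exact Real.rpow_le_rpow_of_exponent_le hsv (by push_cast; linarith)
      have hψs := hψpos _ hts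
      have h6 : a * (s / v) ^ δψ * ψ (1 / s ^ 2) ≤ ψ (1 / v ^ 2) := by
        refine le_trans ?_ hkey
        exact mul_le_mul_of_nonneg_right (mul_le_mul_of_nonneg_left hexp ha.le) hψs.le
      have hsv0 : (0:ℝ) < (s / v) ^ δψ := Real.rpow_pos_of_pos (by positivity) _
      have h7 : ψ (1 / s ^ 2) ≤ ψ (1 / v ^ 2) / (a * (s / v) ^ δψ) := by
        rw [le_div_iff₀ (mul_pos ha hsv0)]
        have hcm : ψ (1 / s ^ 2) * (a * (s / v) ^ δψ)
            = a * (s / v) ^ δψ * ψ (1 / s ^ 2) := by ring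
        rw [hcm]; exact h6
      have h8 : ψ (1 / v ^ 2) / (a * (s / v) ^ δψ) = c * s ^ (-δψ) := by
        have hdr : (s / v) ^ δψ = s ^ δψ / v ^ δψ := Real.div_rpow hs0.le hv0.le δψ
        have hsn : s ^ (-δψ) = (s ^ δψ)⁻¹ := Real.rpow_neg hs0.le δψ
        have hsδ : (0:ℝ) < s ^ δψ := Real.rpow_pos_of_pos hs0 _
        have hvδ : (0:ℝ) < v ^ δψ := Real.rpow_pos_of_pos hv0 _
        rw [hcdef, hdr, hsn]
        field_simp
        try ring
      rw [← h8]; exact h7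
    have hIval : (∫ s in Set.Ioc v 1, s ^ (-δψ)) ≤ (1 - δψ)⁻¹ := by
      rw [← intervalIntegral.integral_of_le hv1]
      rw [integral_rpow (Or.inl (by linarith : (-1:ℝ) < -δψ))]
      rw [Real.one_rpow]
      have hnn : 0 ≤ v ^ (-δψ + 1) := Real.rpow_nonneg hv0.le _
      have h7 : (0:ℝ) < -δψ + 1 := by linarith
      calc (1 - v ^ (-δψ + 1)) / (-δψ + 1) ≤ 1 / (-δψ + 1) := by
            rw [div_le_div_iff₀ h7 h7]
            have h8 : (1 - v ^ (-δψ + 1)) ≤ 1 := by linarith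
            have := mul_le_mul_of_nonneg_right h8 h7.le
            linarith
        _ = (1 - δψ)⁻¹ := by rw [one_div]; ring_nf
    have hJle : J ≤ c * (1 - δψ)⁻¹ := by
      calc J ≤ ∫ s in Set.Ioc v 1, c * s ^ (-δψ) :=
            setIntegral_mono_on hint1 hint2 measurableSet_Ioc hpt2
        _ = c * ∫ s in Set.Ioc v 1, s ^ (-δψ) := by rw [integral_const_mul]
        _ ≤ c * (1 - δψ)⁻¹ := mul_le_mul_of_nonneg_left hIval hc0
    -- exponent bound for v ^ δψ
    have hvδψ : v ^ δψ ≤ r ^ e * a₁ ^ (-δψ) := by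
      calc v ^ δψ ≤ w ^ δψ := Real.rpow_le_rpow hv0.le hvw hδψ.le
        _ ≤ (r ^ δV * a₁⁻¹) ^ δψ := Real.rpow_le_rpow hw0.le hwr hδψ.le
        _ = (r ^ δV) ^ δψ * (a₁⁻¹) ^ δψ :=
            Real.mul_rpow (Real.rpow_nonneg hr0.le _) (inv_nonneg.mpr ha₁.le)
        _ = r ^ (δV * δψ) * a₁ ^ (-δψ) := by
            rw [← Real.rpow_mul hr0.le, Real.inv_rpow ha₁.le, ← Real.rpow_neg ha₁.le]
        _ ≤ r ^ e * a₁ ^ (-δψ) := by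
            refine mul_le_mul_of_nonneg_right ?_ (Real.rpow_nonneg ha₁.le _)
            exact Real.rpow_le_rpow_of_exponent_ge hr0 hr1 (by rw [mul_comm] at heψV; exact heψV)
    -- main numeric bound
    have hb1 : v * (v ^ 2 * ψ (1 / v ^ 2)) ≤ (r ^ e * a₁⁻¹) * (w ^ 2 * ψ (1 / w ^ 2)) :=
      mul_le_mul (hvw.trans hwre) hgm
        (mul_nonneg (by positivity) hψv.le)
        (mul_nonneg (Real.rpow_nonneg hr0.le _) (inv_nonneg.mpr ha₁.le))
    have hb2 : v * (v * J) ≤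
        ((a⁻¹ * (1 - δψ)⁻¹ * a₁ ^ (-δψ)) * r ^ e) * (w ^ 2 * ψ (1 / w ^ 2)) := by
      have h9 : v * (v * J) ≤ v ^ 2 * (c * (1 - δψ)⁻¹) := by
        have h := mul_le_mul_of_nonneg_left hJle (sq_nonneg v)
        calc v * (v * J) = v ^ 2 * J := by ring
          _ ≤ v ^ 2 * (c * (1 - δψ)⁻¹) := h
      have h10 : v ^ 2 * (c * (1 - δψ)⁻¹) =
          (v ^ 2 * ψ (1 / v ^ 2)) * (a⁻¹ * (1 - δψ)⁻¹) * v ^ δψ := by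
        rw [hcdef]; ring
      have h11 : (v ^ 2 * ψ (1 / v ^ 2)) * (a⁻¹ * (1 - δψ)⁻¹) * v ^ δψ ≤
          (w ^ 2 * ψ (1 / w ^ 2)) * (a⁻¹ * (1 - δψ)⁻¹) * (r ^ e * a₁ ^ (-δψ)) := by
        refine mul_le_mul ?_ hvδψ (Real.rpow_nonneg hv0.le _) ?_
        · exact mul_le_mul_of_nonneg_right hgm
            (mul_nonneg (inv_nonneg.mpr ha.le) (inv_nonneg.mpr h1δψ.le))
        · exact mul_nonneg hA.le
            (mul_nonneg (inv_nonneg.mpr ha.le) (inv_nonneg.mpr h1δψ.le))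
      calc v * (v * J) ≤ v ^ 2 * (c * (1 - δψ)⁻¹) := h9
        _ = (v ^ 2 * ψ (1 / v ^ 2)) * (a⁻¹ * (1 - δψ)⁻¹) * v ^ δψ := h10
        _ ≤ (w ^ 2 * ψ (1 / w ^ 2)) * (a⁻¹ * (1 - δψ)⁻¹) * (r ^ e * a₁ ^ (-δψ)) := h11
        _ = ((a⁻¹ * (1 - δψ)⁻¹ * a₁ ^ (-δψ)) * r ^ e) * (w ^ 2 * ψ (1 / w ^ 2)) := by ring
    have hnum : v * (v ^ 2 * ψ (1 / v ^ 2) + v * J) ≤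
        (w ^ 2 * ψ (1 / w ^ 2)) * (K * r ^ e) := by
      calc v * (v ^ 2 * ψ (1 / v ^ 2) + v * J)
          = v * (v ^ 2 * ψ (1 / v ^ 2)) + v * (v * J) := by ring
        _ ≤ (r ^ e * a₁⁻¹) * (w ^ 2 * ψ (1 / w ^ 2))
            + ((a⁻¹ * (1 - δψ)⁻¹ * a₁ ^ (-δψ)) * r ^ e) * (w ^ 2 * ψ (1 / w ^ 2)) :=
            add_le_add hb1 hb2
        _ = (w ^ 2 * ψ (1 / w ^ 2)) * (K * r ^ e) := by rw [hK_def]; ring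
    have hP : (0:ℝ) < w ^ 2 * r ^ d * ψ (1 / w ^ 2) :=
      mul_pos (mul_pos (by positivity) (pow_pos hr0 d)) hψw
    have hf0x : f0 (x - z) = r ^ (e - (d:ℝ)) := by
      rw [hf0]
      rw [Set.indicator_of_mem]
      · rw [← dist_eq_norm]
      · rw [Metric.mem_closedBall, dist_zero_right, ← dist_eq_norm]
        exact hr1
    rw [hf0x]
    apply ENNReal.ofReal_le_ofReal
    unfold rhoWeight13
    calc (v / (w ^ 2 * r ^ d * ψ (1 / w ^ 2))) * (v ^ 2 * ψ (1 / v ^ 2) + v * J)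
        = (v * (v ^ 2 * ψ (1 / v ^ 2) + v * J)) / (w ^ 2 * r ^ d * ψ (1 / w ^ 2)) := by
          ring
      _ ≤ ((w ^ 2 * ψ (1 / w ^ 2)) * (K * r ^ e)) / (w ^ 2 * r ^ d * ψ (1 / w ^ 2)) := by
          rw [div_le_div_iff₀ hP hP]
          exact mul_le_mul_of_nonneg_right hnum hP.le
      _ = (K * r ^ e) / (r ^ d) := by
          rw [show w ^ 2 * r ^ d * ψ (1 / w ^ 2)
              = (w ^ 2 * ψ (1 / w ^ 2)) * (r ^ d : ℝ) from by ring,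
            mul_div_mul_left _ _ (ne_of_gt hA)]
      _ = K * r ^ (e - (d:ℝ)) := by
          rw [mul_div_assoc, ← Real.rpow_natCast r d, ← Real.rpow_sub hr0]
  calc (∫⁻ x in D, ENNReal.ofReal
          ((V (infDist x Dᶜ) /
              (V (dist x z) ^ 2 * dist x z ^ d * ψ (1 / V (dist x z) ^ 2))) *
            rhoWeight13 ψ V (infDist x Dᶜ)))
      ≤ ∫⁻ x in D, ENNReal.ofReal (K * f0 (x - z)) :=
        setLIntegral_mono' hD.measurableSet hpt
    _ ≤ ∫⁻ x, ENNReal.ofReal (K * f0 (x - z)) := setLIntegral_le_lintegral _ _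
    _ = ∫⁻ x, ENNReal.ofReal (K * f0 x) :=
        lintegral_sub_right_eq_self (fun y => ENNReal.ofReal (K * f0 y)) z
    _ = ENNReal.ofReal K * I := by
        simp_rw [ENNReal.ofReal_mul hK.le]
        exact lintegral_const_mul' _ _ ENNReal.ofReal_ne_top
    _ ≤ ENNReal.ofReal ((ENNReal.ofReal K * I).toReal + 1) := by
        conv_lhs => rw [← ENNReal.ofReal_toReal hKI]
        exact ENNReal.ofReal_le_ofReal (le_add_of_nonneg_right zero_le_one)
end
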